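/- arXiv:2211.15609 — 3 statements merged into one kernel-verified Lean document; each statement's English description precedes it below -/
import Mathlib

section
/- Suppose (Φ, φ) satisfy condition (★), fix α ∈ (0,1], and assume τ(1) < ∞. Then there exists a finite constant C > 0, depending only on Φ, φ and α, such that the following holds: for every nondecreasing function h : (0,∞) → (0,∞) with ∫_1^∞ du/h(u) < ∞ and every stochastic process X : [0,1] × Ω → E with continuous sample paths satisfying the increment condition (†), almost surely limsup_{t ↓ 0} ‖X_t − X_0‖ / ( t^α · Φ^{−1}( h( log(1/t) ) ) ) ≤ C. -/
open MeasureTheory Set ENNReal Filter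

/-- The function `τ(t) = ∫_0^{t^α} φ⁻¹(1/(2 u^{1/α})) du`, valued in `[0,∞]`;
`φinv` denotes the inverse `φ⁻¹` of `φ`. -/
noncomputable def tauFn (φinv : ℝ → ℝ) (α : ℝ) (t : ℝ) : ℝ≥0∞ :=
  ∫⁻ u in Set.Ioc (0:ℝ) (t ^ α), ENNReal.ofReal (φinv (1 / (2 * u ^ (1 / α))))

/-- `Φ` is a convex increasing homeomorphism of `[0,∞)` fixing `0`. -/
def ConvexIncHomeo (Φ : ℝ → ℝ) : Prop :=
  ConvexOn ℝ (Set.Ici 0) Φ ∧ StrictMonoOn Φ (Set.Ici 0) ∧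
    ContinuousOn Φ (Set.Ici 0) ∧ Set.BijOn Φ (Set.Ici 0) (Set.Ici 0) ∧ Φ 0 = 0

/-- Condition (★) on the pair `(Φ, φ)`. -/
def StarCond (Φ φ : ℝ → ℝ) : Prop :=
  ∃ R : ℝ, 1 < R ∧ ∃ n₀ : ℕ, 1 ≤ n₀ ∧
    (∀ x y : ℝ, 1 ≤ x → 1 ≤ y → Φ x * Φ y ≤ Φ (R ^ 2 * x * y)) ∧
    (∀ k : ℕ, 1 ≤ k → φ (R ^ k) / φ (R ^ (k + 1)) ≤ φ (R ^ (k - 1)) / φ (R ^ k)) ∧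
    Summable (fun k : ℕ => φ (R ^ k) / Φ (R ^ (k + n₀)))

lemma cih_nonneg {Φ : ℝ → ℝ} (hΦ : ConvexIncHomeo Φ) {x : ℝ} (hx : 0 ≤ x) : 0 ≤ Φ x :=
  hΦ.2.2.2.1.mapsTo hx

lemma cih_mono {Φ : ℝ → ℝ} (hΦ : ConvexIncHomeo Φ) {x y : ℝ} (hx : 0 ≤ x) (hxy : x ≤ y) :
    Φ x ≤ Φ y := by
  rcases eq_or_lt_of_le hxy with rfl | hlt
  · exact le_rfl
  · exact (hΦ.2.1 hx (hx.trans hxy) hlt).le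

lemma cih_le_self {Φ : ℝ → ℝ} (hΦ : ConvexIncHomeo Φ) (hΦ1 : Φ 1 = 1) {x : ℝ} (hx : 1 ≤ x) :
    x ≤ Φ x := by
  have hx0 : (0:ℝ) < x := lt_of_lt_of_le one_pos hx
  have h := hΦ.1.2 (mem_Ici.2 (le_refl (0:ℝ))) (mem_Ici.2 hx0.le)
    (show (0:ℝ) ≤ 1 - 1/x by rw [sub_nonneg]; exact div_le_one_of_le₀ hx (by positivity))
    (show (0:ℝ) ≤ 1/x by positivity) (by ring)
  simp only [smul_eq_mul, mul_zero, zero_add, hΦ.2.2.2.2] at h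
  rw [one_div, inv_mul_cancel₀ hx0.ne', hΦ1] at h
  have h2 := mul_le_mul_of_nonneg_left h hx0.le
  rwa [mul_one, ← mul_assoc, mul_inv_cancel₀ hx0.ne', one_mul] at h2

lemma cih_inv_spec {Φ Φinv : ℝ → ℝ} (hΦ : ConvexIncHomeo Φ)
    (hΦinv : Set.InvOn Φinv Φ (Set.Ici 0) (Set.Ici 0)) {y : ℝ} (hy : 0 ≤ y) :
    0 ≤ Φinv y ∧ Φ (Φinv y) = y := by
  obtain ⟨x, hx, hxy⟩ := hΦ.2.2.2.1.surjOn (mem_Ici.2 hy)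
  have : Φinv y = x := by rw [← hxy]; exact hΦinv.1 hx
  rw [this, hxy]; exact ⟨hx, rfl⟩

lemma cih_inv_mono {Φ Φinv : ℝ → ℝ} (hΦ : ConvexIncHomeo Φ)
    (hΦinv : Set.InvOn Φinv Φ (Set.Ici 0) (Set.Ici 0)) {y₁ y₂ : ℝ} (h1 : 0 ≤ y₁)
    (h12 : y₁ ≤ y₂) : Φinv y₁ ≤ Φinv y₂ := by
  by_contra hcon
  push_neg at hcon
  have s1 := cih_inv_spec hΦ hΦinv h1
  have s2 := cih_inv_spec hΦ hΦinv (h1.trans h12)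
  have := hΦ.2.1 s2.1 s1.1 hcon
  rw [s1.2, s2.2] at this
  linarith

lemma cih_inv_one {Φ Φinv : ℝ → ℝ} (hΦ : ConvexIncHomeo Φ) (hΦ1 : Φ 1 = 1)
    (hΦinv : Set.InvOn Φinv Φ (Set.Ici 0) (Set.Ici 0)) : Φinv 1 = 1 := by
  have := hΦinv.1 (mem_Ici.2 (zero_le_one (α := ℝ)))
  rwa [hΦ1] at this

lemma cih_inv_ge_one {Φ Φinv : ℝ → ℝ} (hΦ : ConvexIncHomeo Φ) (hΦ1 : Φ 1 = 1)
    (hΦinv : Set.InvOn Φinv Φ (Set.Ici 0) (Set.Ici 0)) {y : ℝ} (hy : 1 ≤ y) : 1 ≤ Φinv y := by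
  rw [← cih_inv_one hΦ hΦ1 hΦinv]
  exact cih_inv_mono hΦ hΦinv zero_le_one hy

lemma tau_series {φinv : ℝ → ℝ} {α R : ℝ} (hα : 0 < α) (hR : 1 < R)
    (hmono : ∀ y₁ y₂ : ℝ, 0 ≤ y₁ → y₁ ≤ y₂ → φinv y₁ ≤ φinv y₂)
    (hnn : ∀ y : ℝ, 0 ≤ y → 0 ≤ φinv y)
    (hτ : tauFn φinv α 1 ≠ ⊤) :
    ∑' m : ℕ, ENNReal.ofReal (φinv (R ^ m / 2) * (((R ^ m)⁻¹ : ℝ) ^ α)) < ⊤ := by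
  have hR0 : (0:ℝ) < R := lt_trans one_pos hR
  set D : ℕ → ℝ := fun m => ((R ^ m)⁻¹ : ℝ) with hD
  have hDpos : ∀ m, 0 < D m := fun m => by positivity
  have hDle1 : ∀ m, D m ≤ 1 := fun m => by
    rw [hD]; exact inv_le_one_of_one_le₀ (one_le_pow₀ hR.le)
  have hDdec : ∀ m, D (m + 1) < D m := fun m => by
    rw [hD]
    exact inv_strictAnti₀ (by positivity) (by
      rw [pow_succ]
      nlinarith [pow_pos hR0 m, one_le_pow₀ (le_of_lt hR) (n := m)])
  -- the intervals
  set I : ℕ → Set ℝ := fun m => Set.Ioc (D (m + 1) ^ α) (D m ^ α) with hI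
  have hIa : ∀ m, D (m+1) ^ α < D m ^ α := fun m =>
    Real.rpow_lt_rpow (hDpos _).le (hDdec m) hα
  have hIsub : ∀ m, I m ⊆ Set.Ioc (0:ℝ) 1 := by
    intro m u hu
    refine ⟨lt_of_le_of_lt (Real.rpow_nonneg (hDpos _).le α) hu.1, hu.2.trans ?_⟩
    exact Real.rpow_le_one (hDpos m).le (hDle1 m) hα.le
  set g : ℝ → ℝ≥0∞ := fun u => ENNReal.ofReal (φinv (1 / (2 * u ^ (1 / α)))) with hg
  -- pointwise bound on I m
  have hpt : ∀ m, ∀ u ∈ I m, ENNReal.ofReal (φinv (R ^ m / 2)) ≤ g u := by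
    intro m u hu
    have hu0 : (0:ℝ) < u := lt_of_le_of_lt (Real.rpow_nonneg (hDpos _).le α) hu.1
    have h1 : u ^ (1/α) ≤ D m := by
      have h2 : u ^ (1/α) ≤ (D m ^ α) ^ (1/α) :=
        Real.rpow_le_rpow hu0.le hu.2 (by positivity)
      rwa [← Real.rpow_mul (hDpos m).le, mul_one_div_cancel hα.ne', Real.rpow_one] at h2
    have h3 : R ^ m / 2 ≤ 1 / (2 * u ^ (1/α)) := by
      have hup : (0:ℝ) < u ^ (1/α) := Real.rpow_pos_of_pos hu0 _
      rw [div_le_div_iff₀ (by norm_num) (by positivity)]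
      calc R ^ m * (2 * u ^ (1/α)) ≤ R ^ m * (2 * D m) := by
            have := mul_le_mul_of_nonneg_left h1 (show (0:ℝ) ≤ 2 by norm_num)
            exact mul_le_mul_of_nonneg_left this (by positivity)
        _ = 1 * 2 := by
            rw [hD]; field_simp
    exact ENNReal.ofReal_le_ofReal (hmono _ _ (by positivity) h3)
  -- integral lower bound on each piece
  have hint : ∀ m, ENNReal.ofReal (φinv (R ^ m / 2)) * ENNReal.ofReal (D m ^ α - D (m+1) ^ α)
      ≤ ∫⁻ u in I m, g u := by
    intro m
    have hmeas : MeasurableSet (I m) := measurableSet_Ioc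
    have h1 : ∫⁻ u in I m, ENNReal.ofReal (φinv (R ^ m / 2)) ≤ ∫⁻ u in I m, g u := by
      refine lintegral_mono_ae ?_
      rw [ae_restrict_iff' hmeas]
      exact Filter.Eventually.of_forall (hpt m)
    rwa [setLIntegral_const, hI, Real.volume_Ioc] at h1
  -- partial sums
  have hpartial : ∀ M : ℕ, ∑ m ∈ Finset.range M, ∫⁻ u in I m, g u
      = ∫⁻ u in Set.Ioc (D M ^ α) 1, g u := by
    intro M
    induction M with
    | zero => simp [hD, Real.one_rpow]
    | succ M ih =>
        rw [Finset.sum_range_succ, ih]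
        have hle1 : D M ^ α ≤ 1 := Real.rpow_le_one (hDpos M).le (hDle1 M) hα.le
        have hun : Set.Ioc (D (M+1) ^ α) 1
            = Set.Ioc (D (M+1) ^ α) (D M ^ α) ∪ Set.Ioc (D M ^ α) 1 :=
          (Set.Ioc_union_Ioc_eq_Ioc (hIa M).le hle1).symm
        rw [hun, lintegral_union measurableSet_Ioc (Set.Ioc_disjoint_Ioc_of_le le_rfl), add_comm]
  have hsum : ∑' m : ℕ, ∫⁻ u in I m, g u ≤ tauFn φinv α 1 := by
    rw [ENNReal.tsum_eq_iSup_nat]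
    refine iSup_le fun M => ?_
    rw [hpartial M]
    unfold tauFn
    rw [Real.one_rpow]
    exact lintegral_mono_set (Set.Ioc_subset_Ioc_left (Real.rpow_nonneg (hDpos M).le α))
  -- factor out the constant
  set κ : ℝ≥0∞ := ENNReal.ofReal (1 - D 1 ^ α) with hκ
  have hD1lt : D 1 ^ α < 1 := by
    apply Real.rpow_lt_one (hDpos 1).le _ hα
    rw [hD]
    simp only [pow_one]
    exact inv_lt_one_of_one_lt₀ hR
  have hκ0 : κ ≠ 0 := by
    rw [hκ]
    simp only [ne_eq, ENNReal.ofReal_eq_zero, not_le]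
    linarith
  have hvol : ∀ m, ENNReal.ofReal (D m ^ α - D (m+1) ^ α)
      = ENNReal.ofReal (D m ^ α) * κ := by
    intro m
    have hDm1 : D (m+1) = D m * D 1 := by
      simp only [hD]
      rw [pow_succ, mul_inv, pow_one]
    have : D (m+1) ^ α = D m ^ α * D 1 ^ α := by
      rw [hDm1, Real.mul_rpow (hDpos m).le (hDpos 1).le]
    rw [this, hκ, ← ENNReal.ofReal_mul (Real.rpow_nonneg (hDpos m).le α)]
    ring_nf
  set a : ℕ → ℝ≥0∞ := fun m => ENNReal.ofReal (φinv (R ^ m / 2)) * ENNReal.ofReal (D m ^ α)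
    with haa
  have hak : ∀ m, a m * κ ≤ ∫⁻ u in I m, g u := by
    intro m
    have := hint m
    rwa [hvol m, ← mul_assoc] at this
  have htot : (∑' m, a m) * κ ≤ tauFn φinv α 1 := by
    rw [← ENNReal.tsum_mul_right]
    exact le_trans (ENNReal.tsum_le_tsum hak) hsum
  have hfin : (∑' m, a m) ≠ ⊤ := by
    intro hcon
    rw [hcon, ENNReal.top_mul hκ0] at htot
    exact hτ (top_le_iff.mp htot)
  have heq : (fun m : ℕ => ENNReal.ofReal (φinv (R ^ m / 2) * (((R ^ m)⁻¹ : ℝ) ^ α))) = a := by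
    funext m
    simp only [haa]
    rw [ENNReal.ofReal_mul (hnn _ (by positivity))]
  rw [heq, lt_top_iff_ne_top]
  exact hfin

lemma seriesB {Φ φ φinv : ℝ → ℝ} {R : ℝ} {n₀ : ℕ} (hR : 1 < R)
    (hφspec : ∀ y : ℝ, 0 ≤ y → φ (φinv y) = y)
    (hφinv1 : ∀ m : ℕ, 1 ≤ φinv (R ^ m))
    (hφmono : ∀ x y : ℝ, 0 ≤ x → x ≤ y → φ x ≤ φ y)
    (hφge : ∀ x : ℝ, 1 ≤ x → x ≤ φ x)
    (hΦmono : ∀ x y : ℝ, 0 ≤ x → x ≤ y → Φ x ≤ Φ y)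
    (hΦge : ∀ x : ℝ, 1 ≤ x → x ≤ Φ x)
    (hc : Summable (fun k : ℕ => φ (R ^ k) / Φ (R ^ (k + n₀)))) :
    ∑' m : ℕ, ENNReal.ofReal (4 * R ^ (m+1)) *
      (ENNReal.ofReal (Φ (R ^ (n₀ + 2) * φinv (R ^ m))))⁻¹ < ⊤ := by
  have hR0 : (0:ℝ) < R := lt_trans one_pos hR
  have hRpow1 : ∀ k : ℕ, (1:ℝ) ≤ R ^ k := fun k => one_le_pow₀ hR.le
  have hΦpos : ∀ k : ℕ, (0:ℝ) < Φ (R ^ k) := fun k =>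
    lt_of_lt_of_le (by positivity) (hΦge _ (hRpow1 k))
  have hφpos : ∀ k : ℕ, (0:ℝ) < φ (R ^ k) := fun k =>
    lt_of_lt_of_le (by positivity) (hφge _ (hRpow1 k))
  set w : ℕ → ℝ := fun k => φ (R ^ k) / Φ (R ^ (k + n₀)) with hw
  have hwnn : ∀ k, 0 ≤ w k := fun k => le_of_lt (div_pos (hφpos k) (hΦpos _))
  have hW : ∑' k, ENNReal.ofReal (w k) < ⊤ := by
    rw [← ENNReal.ofReal_tsum_of_nonneg hwnn hc]
    exact ENNReal.ofReal_lt_top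
  set y : ℕ → ℝ := fun m => φinv (R ^ m) with hy
  have hy1 : ∀ m, (1:ℝ) ≤ y m := hφinv1
  have hy0 : ∀ m, (0:ℝ) < y m := fun m => lt_of_lt_of_le one_pos (hy1 m)
  set ℓ : ℕ → ℕ := fun m => ⌊Real.logb R (y m)⌋₊ with hℓ
  have hlogbnn : ∀ m, 0 ≤ Real.logb R (y m) := fun m => Real.logb_nonneg hR (hy1 m)
  have hℓle : ∀ m, (R:ℝ) ^ (ℓ m) ≤ y m := by
    intro m
    have h1 : ((ℓ m : ℝ)) ≤ Real.logb R (y m) := Nat.floor_le (hlogbnn m)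
    calc (R:ℝ) ^ (ℓ m) = R ^ ((ℓ m : ℝ)) := (Real.rpow_natCast R (ℓ m)).symm
      _ ≤ R ^ Real.logb R (y m) := Real.rpow_le_rpow_of_exponent_le hR.le h1
      _ = y m := Real.rpow_logb hR0 hR.ne' (hy0 m)
  have hℓge : ∀ m, y m ≤ (R:ℝ) ^ (ℓ m + 1) := by
    intro m
    have h1 : Real.logb R (y m) ≤ ((ℓ m : ℝ)) + 1 := (Nat.lt_floor_add_one _).le
    calc y m = R ^ Real.logb R (y m) := (Real.rpow_logb hR0 hR.ne' (hy0 m)).symm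
      _ ≤ R ^ (((ℓ m : ℝ)) + 1) := Real.rpow_le_rpow_of_exponent_le hR.le h1
      _ = R ^ (ℓ m + 1) := by
          rw [← Real.rpow_natCast R (ℓ m + 1)]
          norm_num
  have hfiber : ∀ m, (R:ℝ) ^ m ≤ φ (R ^ (ℓ m + 1)) := by
    intro m
    have h1 : (R:ℝ) ^ m = φ (y m) := (hφspec _ (by positivity)).symm
    rw [h1]
    exact hφmono _ _ (hy0 m).le (hℓge m)
  set G : ℕ → ℝ≥0∞ := fun m => ENNReal.ofReal (4 * R ^ (m+1)) *
    (ENNReal.ofReal (Φ (R ^ (ℓ m + n₀ + 2))))⁻¹ with hG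
  have hFG : ∀ m, ENNReal.ofReal (4 * R ^ (m+1)) *
      (ENNReal.ofReal (Φ (R ^ (n₀ + 2) * φinv (R ^ m))))⁻¹ ≤ G m := by
    intro m
    refine mul_le_mul_right (ENNReal.inv_le_inv.mpr (ENNReal.ofReal_le_ofReal ?_)) _
    refine hΦmono _ _ (by positivity) ?_
    calc (R:ℝ) ^ (ℓ m + n₀ + 2) = R ^ (n₀ + 2) * R ^ (ℓ m) := by ring
      _ ≤ R ^ (n₀ + 2) * y m := mul_le_mul_of_nonneg_left (hℓle m) (by positivity)
  have hGrep : ∀ m, G m = ∑' k : ℕ, (if ℓ m = k then ENNReal.ofReal (4 * R ^ (m+1)) *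
      (ENNReal.ofReal (Φ (R ^ (k + n₀ + 2))))⁻¹ else 0) := by
    intro m
    rw [tsum_eq_single (ℓ m) (fun k hk => by rw [if_neg (fun hc' => hk hc'.symm)])]
    rw [if_pos rfl]
  have hswap : ∑' m, G m = ∑' k : ℕ, (∑' m : ℕ, (if ℓ m = k then
      ENNReal.ofReal (4 * R ^ (m+1)) else 0)) * (ENNReal.ofReal (Φ (R ^ (k + n₀ + 2))))⁻¹ := by
    calc ∑' m, G m = ∑' m, ∑' k : ℕ, (if ℓ m = k then ENNReal.ofReal (4 * R ^ (m+1)) *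
        (ENNReal.ofReal (Φ (R ^ (k + n₀ + 2))))⁻¹ else 0) := tsum_congr hGrep
      _ = ∑' k : ℕ, ∑' m : ℕ, (if ℓ m = k then ENNReal.ofReal (4 * R ^ (m+1)) *
        (ENNReal.ofReal (Φ (R ^ (k + n₀ + 2))))⁻¹ else 0) := ENNReal.tsum_comm
      _ = _ := by
          refine tsum_congr fun k => ?_
          rw [← ENNReal.tsum_mul_right]
          refine tsum_congr fun m => ?_
          rw [ite_mul, zero_mul]
  have hV : ∀ k : ℕ, (∑' m : ℕ, (if ℓ m = k then ENNReal.ofReal (4 * R ^ (m+1)) else 0))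
      ≤ ENNReal.ofReal ((4 * R ^ 2 / (R - 1)) * φ (R ^ (k + 1))) := by
    intro k
    have hP1 : (1:ℝ) ≤ φ (R ^ (k+1)) := le_trans (hRpow1 (k+1)) (hφge _ (hRpow1 (k+1)))
    set M : ℕ := ⌊Real.logb R (φ (R ^ (k+1)))⌋₊ with hM
    have h1 : ∀ m : ℕ, ℓ m = k → m ≤ M := by
      intro m hm
      have h2 : (R:ℝ) ^ m ≤ φ (R ^ (k+1)) := by rw [← hm]; exact hfiber m
      have h3 : ((m:ℝ)) ≤ Real.logb R (φ (R ^ (k+1))) := by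
        rw [Real.le_logb_iff_rpow_le hR (lt_of_lt_of_le one_pos hP1)]
        rwa [Real.rpow_natCast]
      exact Nat.le_floor h3
    have hRM : (R:ℝ) ^ M ≤ φ (R ^ (k+1)) := by
      have h4 : ((M:ℝ)) ≤ Real.logb R (φ (R ^ (k+1))) :=
        Nat.floor_le (Real.logb_nonneg hR hP1)
      calc (R:ℝ) ^ M = R ^ ((M:ℝ)) := (Real.rpow_natCast R M).symm
        _ ≤ R ^ Real.logb R (φ (R ^ (k+1))) := Real.rpow_le_rpow_of_exponent_le hR.le h4
        _ = φ (R ^ (k+1)) := Real.rpow_logb hR0 hR.ne' (lt_of_lt_of_le one_pos hP1)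
    calc (∑' m : ℕ, (if ℓ m = k then ENNReal.ofReal (4 * R ^ (m+1)) else 0))
        ≤ ∑' m : ℕ, (if m ≤ M then ENNReal.ofReal (4 * R ^ (m+1)) else 0) := by
          refine ENNReal.tsum_le_tsum fun m => ?_
          by_cases hm : ℓ m = k
          · rw [if_pos hm, if_pos (h1 m hm)]
          · rw [if_neg hm]; exact zero_le
      _ = ∑ m ∈ Finset.range (M+1), ENNReal.ofReal (4 * R ^ (m+1)) := by
          rw [tsum_eq_sum (s := Finset.range (M+1))
            (fun m hm => if_neg (fun hc' => hm (Finset.mem_range.mpr (Nat.lt_succ_iff.mpr hc'))))]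
          refine Finset.sum_congr rfl fun m hm => ?_
          rw [if_pos (Nat.lt_succ_iff.mp (Finset.mem_range.mp hm))]
      _ ≤ ENNReal.ofReal ((4 * R ^ 2 / (R - 1)) * φ (R ^ (k + 1))) := by
          rw [← ENNReal.ofReal_sum_of_nonneg (fun m _ => by positivity)]
          refine ENNReal.ofReal_le_ofReal ?_
          have hgeom : ∑ m ∈ Finset.range (M+1), (4:ℝ) * R ^ (m+1)
              = 4 * R * ((R ^ (M+1) - 1) / (R - 1)) := by
            rw [← geom_sum_eq hR.ne' (M+1), Finset.mul_sum]
            exact Finset.sum_congr rfl fun m _ => by ring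
          rw [hgeom]
          have hR1 : (0:ℝ) < R - 1 := by linarith
          have e1 : 4 * R * ((R ^ (M+1) - 1) / (R - 1)) = (4*R*(R^(M+1) - 1))/(R-1) := by
            ring
          have e2 : (4 * R ^ 2 / (R - 1)) * φ (R ^ (k+1)) = (4*R^2* φ (R ^ (k+1)))/(R-1) := by
            ring
          rw [e1, e2, div_le_div_iff_of_pos_right hR1]
          have h5 : (R:ℝ) ^ (M + 1) = R * R ^ M := by ring
          nlinarith [mul_le_mul_of_nonneg_left hRM (show (0:ℝ) ≤ 4*R^2 by positivity), hR0]
  have hfinal : ∑' m, G m < ⊤ := by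
    rw [hswap]
    have hbd : ∀ k : ℕ, (∑' m : ℕ, (if ℓ m = k then ENNReal.ofReal (4 * R ^ (m+1)) else 0)) *
        (ENNReal.ofReal (Φ (R ^ (k + n₀ + 2))))⁻¹
        ≤ ENNReal.ofReal (4 * R ^ 2 / (R - 1)) * ENNReal.ofReal (w (k+2)) := by
      intro k
      refine le_trans (mul_le_mul_left (hV k) _) ?_
      rw [ENNReal.ofReal_mul (show (0:ℝ) ≤ 4 * R ^ 2 / (R - 1) by
        have : (0:ℝ) < R - 1 := by linarith
        positivity)]
      rw [mul_assoc]
      refine mul_le_mul_right ?_ _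
      have hexp : k + n₀ + 2 = (k + 2) + n₀ := by omega
      rw [hexp]
      have hφle : φ (R ^ (k+1)) ≤ φ (R ^ (k+2)) := hφmono _ _ (by positivity)
        (pow_le_pow_right₀ hR.le (by omega))
      have hwe : ENNReal.ofReal (w (k+2)) = ENNReal.ofReal (φ (R ^ (k+2))) *
          (ENNReal.ofReal (Φ (R ^ ((k+2) + n₀))))⁻¹ := by
        rw [hw]
        rw [ENNReal.ofReal_div_of_pos (hΦpos _), div_eq_mul_inv]
      rw [hwe]
      exact mul_le_mul_left (ENNReal.ofReal_le_ofReal hφle) _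
    calc ∑' k : ℕ, (∑' m : ℕ, (if ℓ m = k then
          ENNReal.ofReal (4 * R ^ (m+1)) else 0)) * (ENNReal.ofReal (Φ (R ^ (k + n₀ + 2))))⁻¹
        ≤ ∑' k : ℕ, ENNReal.ofReal (4 * R ^ 2 / (R - 1)) * ENNReal.ofReal (w (k+2)) :=
          ENNReal.tsum_le_tsum hbd
      _ = ENNReal.ofReal (4 * R ^ 2 / (R - 1)) * ∑' k, ENNReal.ofReal (w (k+2)) :=
          ENNReal.tsum_mul_left
      _ < ⊤ := by
          refine ENNReal.mul_lt_top ENNReal.ofReal_lt_top ?_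
          exact lt_of_le_of_lt (ENNReal.tsum_comp_le_tsum_of_injective
            (add_left_injective 2) (fun k => ENNReal.ofReal (w k))) hW
  exact lt_of_le_of_lt (ENNReal.tsum_le_tsum hFG) hfinal

lemma sum_le_integral_aux {g : ℝ → ℝ} (hint : IntegrableOn g (Set.Ioi 1) volume)
    (hg0 : ∀ u ∈ Set.Ioi (1:ℝ), 0 ≤ g u) {a c : ℝ} (ha : 1 ≤ a) (hc : 0 < c) (n : ℕ) :
    ∑ i ∈ Finset.range n, ∫ u in Set.Ioc (a + c*i) (a + c*(i+1)), g u
      ≤ ∫ u in Set.Ioi 1, g u := by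
  have hsub : ∀ x y : ℝ, a ≤ x → Set.Ioc x y ⊆ Set.Ioi 1 := fun x y hx u hu =>
    mem_Ioi.mpr (lt_of_le_of_lt (ha.trans hx) hu.1)
  have key : ∀ m : ℕ, ∑ i ∈ Finset.range m, ∫ u in Set.Ioc (a + c*i) (a + c*(i+1)), g u
      = ∫ u in Set.Ioc a (a + c*m), g u := by
    intro m
    induction m with
    | zero => simp
    | succ m ih =>
        rw [Finset.sum_range_succ, ih]
        have h1 : a ≤ a + c * m := by
          have : (0:ℝ) ≤ c * m := by positivity
          linarith
        have h2 : a + c * m ≤ a + c * (m + 1) := by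
          have : (0:ℝ) < c := hc
          push_cast
          nlinarith
        have hun : Set.Ioc a (a + c * ((m:ℕ)+1:ℕ)) =
            Set.Ioc a (a + c*m) ∪ Set.Ioc (a + c*m) (a + c*((m:ℝ)+1)) := by
          rw [Set.Ioc_union_Ioc_eq_Ioc h1 h2]
          push_cast
          ring_nf
        rw [hun, setIntegral_union (Set.Ioc_disjoint_Ioc_of_le le_rfl) measurableSet_Ioc
          (hint.mono_set (hsub _ _ le_rfl)) (hint.mono_set (hsub _ _ h1))]
  rw [key n]
  refine setIntegral_mono_set hint ?_ ?_
  · rw [Filter.EventuallyLE]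
    rw [ae_restrict_iff' measurableSet_Ioi]
    exact Filter.Eventually.of_forall (fun u hu => hg0 u hu)
  · exact (hsub _ _ le_rfl).eventuallyLE

lemma markov_aux {Ω : Type} [MeasurableSpace Ω] {ℙ : Measure Ω} {g : Ω → ℝ} {Φ : ℝ → ℝ}
    (hg : Measurable g) (hΦmono : ∀ x y : ℝ, 0 ≤ x → x ≤ y → Φ x ≤ Φ y)
    (hint : ∫⁻ ω, ENNReal.ofReal (Φ (g ω)) ∂ℙ ≤ 1) {lam : ℝ} (hlam : 0 ≤ lam) :
    ℙ {ω | lam < g ω} ≤ (ENNReal.ofReal (Φ lam))⁻¹ := by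
  have hA : MeasurableSet {ω | lam < g ω} := measurableSet_lt measurable_const hg
  have h1 : ENNReal.ofReal (Φ lam) * ℙ {ω | lam < g ω} ≤ 1 := by
    calc ENNReal.ofReal (Φ lam) * ℙ {ω | lam < g ω}
        = ∫⁻ _ω in {ω | lam < g ω}, ENNReal.ofReal (Φ lam) ∂ℙ :=
          (setLIntegral_const _ _).symm
      _ ≤ ∫⁻ ω in {ω | lam < g ω}, ENNReal.ofReal (Φ (g ω)) ∂ℙ := by
          refine lintegral_mono_ae ?_
          rw [ae_restrict_iff' hA]
          exact Filter.Eventually.of_forall fun ω hω =>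
            ENNReal.ofReal_le_ofReal (hΦmono _ _ hlam (le_of_lt hω))
      _ ≤ ∫⁻ ω, ENNReal.ofReal (Φ (g ω)) ∂ℙ := setLIntegral_le_lintegral _ _
      _ ≤ 1 := hint
  rw [ENNReal.le_inv_iff_mul_le, mul_comm]
  exact h1

set_option maxHeartbeats 2000000 in
/-- Law-of-the-iterated-logarithm-type upper bound: under condition (★) and `τ(1) < ∞`,
there is `C > 0` depending only on `Φ, φ, α` such that for every nondecreasing
`h : (0,∞) → (0,∞)` with `∫_1^∞ du/h(u) < ∞` and every continuous process `X` satisfying the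
increment condition (†), almost surely
`limsup_{t ↓ 0} ‖X_t − X_0‖ / (t^α Φ⁻¹(h(log(1/t)))) ≤ C`. -/
theorem stmt_1 (Φ φ φinv Φinv : ℝ → ℝ)
    (hΦ : ConvexIncHomeo Φ) (hφ : ConvexIncHomeo φ) (hΦ1 : Φ 1 = 1) (hφ1 : φ 1 = 1)
    (hφinv : Set.InvOn φinv φ (Set.Ici 0) (Set.Ici 0))
    (hΦinv : Set.InvOn Φinv Φ (Set.Ici 0) (Set.Ici 0))
    (hstar : StarCond Φ φ) (α : ℝ) (hα : α ∈ Set.Ioc (0:ℝ) 1)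
    (hτ1 : tauFn φinv α 1 ≠ ⊤) :
    ∃ C : ℝ, 0 < C ∧
      ∀ (h : ℝ → ℝ), MonotoneOn h (Set.Ioi 0) → (∀ u : ℝ, 0 < u → 0 < h u) →
        IntegrableOn (fun u => 1 / h u) (Set.Ioi 1) →
        ∀ (Ω : Type) [MeasurableSpace Ω] (ℙ : Measure Ω) [IsProbabilityMeasure ℙ]
          (E : Type) [NormedAddCommGroup E] [NormedSpace ℝ E] [CompleteSpace E]
          [TopologicalSpace.SeparableSpace E] [MeasurableSpace E] [BorelSpace E]
          (X : ℝ → Ω → E),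
          (∀ ω, ContinuousOn (fun t => X t ω) (Set.Icc 0 1)) →
          (∀ t, Measurable (X t)) →
          (∀ s ∈ Set.Icc (0:ℝ) 1, ∀ t ∈ Set.Icc (0:ℝ) 1, s ≠ t →
            ∫⁻ ω, ENNReal.ofReal (Φ (‖X s ω - X t ω‖ / |s - t| ^ α)) ∂ℙ ≤ 1) →
          ∀ᵐ ω ∂ℙ,
            Filter.limsup (fun t : ℝ =>
                ENNReal.ofReal (‖X t ω - X 0 ω‖ / (t ^ α * Φinv (h (Real.log (1 / t))))))
              (nhdsWithin 0 (Set.Ioi 0)) ≤ ENNReal.ofReal C := by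
  obtain ⟨hα0, hα1⟩ := hα
  obtain ⟨R, hR, n₀, hn₀, hA, hB, hC⟩ := hstar
  have hR0 : (0:ℝ) < R := lt_trans one_pos hR
  -- basic facts about Φ, φ and their inverses
  have hφmono : ∀ x y : ℝ, 0 ≤ x → x ≤ y → φ x ≤ φ y := fun x y hx hxy => cih_mono hφ hx hxy
  have hφge : ∀ x : ℝ, 1 ≤ x → x ≤ φ x := fun x hx => cih_le_self hφ hφ1 hx
  have hφinvnn : ∀ y : ℝ, 0 ≤ y → 0 ≤ φinv y := fun y hy => (cih_inv_spec hφ hφinv hy).1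
  have hφspec : ∀ y : ℝ, 0 ≤ y → φ (φinv y) = y := fun y hy => (cih_inv_spec hφ hφinv hy).2
  have hφinvmono : ∀ y₁ y₂ : ℝ, 0 ≤ y₁ → y₁ ≤ y₂ → φinv y₁ ≤ φinv y₂ :=
    fun _ _ a b => cih_inv_mono hφ hφinv a b
  have hφinvge1 : ∀ y : ℝ, 1 ≤ y → 1 ≤ φinv y := fun y hy => cih_inv_ge_one hφ hφ1 hφinv hy
  have hΦmono : ∀ x y : ℝ, 0 ≤ x → x ≤ y → Φ x ≤ Φ y := fun x y hx hxy => cih_mono hΦ hx hxy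
  have hΦge : ∀ x : ℝ, 1 ≤ x → x ≤ Φ x := fun x hx => cih_le_self hΦ hΦ1 hx
  have hΦinvnn : ∀ y : ℝ, 0 ≤ y → 0 ≤ Φinv y := fun y hy => (cih_inv_spec hΦ hΦinv hy).1
  have hΦspec : ∀ y : ℝ, 0 ≤ y → Φ (Φinv y) = y := fun y hy => (cih_inv_spec hΦ hΦinv hy).2
  have hΦinvmono : ∀ y₁ y₂ : ℝ, 0 ≤ y₁ → y₁ ≤ y₂ → Φinv y₁ ≤ Φinv y₂ :=
    fun _ _ a b => cih_inv_mono hΦ hΦinv a b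
  have hΦinvge1 : ∀ y : ℝ, 1 ≤ y → 1 ≤ Φinv y := fun y hy => cih_inv_ge_one hΦ hΦ1 hΦinv hy
  have hRpow1 : ∀ k : ℕ, (1:ℝ) ≤ R ^ k := fun k => one_le_pow₀ hR.le
  have hφinvR1 : ∀ m : ℕ, 1 ≤ φinv (R ^ m) := fun m => hφinvge1 _ (hRpow1 m)
  obtain ⟨m₁, hm₁⟩ := pow_unbounded_of_one_lt (2:ℝ) hR
  -- the series SA
  have hT := tau_series (φinv := φinv) (α := α) (R := R) hα0 hR hφinvmono hφinvnn hτ1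
  set SAe : ℝ≥0∞ := ∑' m : ℕ, ENNReal.ofReal (φinv (R ^ m) * (((R ^ m)⁻¹ : ℝ) ^ α)) with hSAe
  have hSAfin : SAe ≠ ⊤ := by
    have hbd : ∀ m : ℕ, ENNReal.ofReal (φinv (R ^ m) * (((R ^ m)⁻¹ : ℝ) ^ α))
        ≤ ENNReal.ofReal (((R:ℝ) ^ m₁) ^ α) *
          ENNReal.ofReal (φinv (R ^ (m + m₁) / 2) * (((R ^ (m + m₁))⁻¹ : ℝ) ^ α)) := by
      intro m
      rw [← ENNReal.ofReal_mul (by positivity)]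
      refine ENNReal.ofReal_le_ofReal ?_
      have h1 : φinv (R ^ m) ≤ φinv (R ^ (m + m₁) / 2) := by
        refine hφinvmono _ _ (by positivity) ?_
        rw [pow_add]
        nlinarith [pow_pos hR0 m, pow_pos hR0 m₁]
      have h2 : (((R ^ m)⁻¹ : ℝ) ^ α) = ((R:ℝ) ^ m₁) ^ α * (((R ^ (m + m₁))⁻¹ : ℝ) ^ α) := by
        rw [← Real.mul_rpow (by positivity) (by positivity)]
        congr 1
        rw [pow_add]
        field_simp
      rw [h2]
      calc φinv (R ^ m) * (((R:ℝ) ^ m₁) ^ α * (((R ^ (m + m₁))⁻¹ : ℝ) ^ α))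
          = ((R:ℝ) ^ m₁) ^ α * (φinv (R ^ m) * (((R ^ (m + m₁))⁻¹ : ℝ) ^ α)) := by ring
        _ ≤ ((R:ℝ) ^ m₁) ^ α * (φinv (R ^ (m + m₁) / 2) * (((R ^ (m + m₁))⁻¹ : ℝ) ^ α)) := by
            refine mul_le_mul_of_nonneg_left
              (mul_le_mul_of_nonneg_right h1 (by positivity)) (by positivity)
    refine ne_top_of_le_ne_top ?_ (ENNReal.tsum_le_tsum hbd)
    have hshift : ∑' m : ℕ, ENNReal.ofReal (φinv (R ^ (m + m₁) / 2) * (((R ^ (m + m₁))⁻¹ : ℝ) ^ α))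
        ≤ ∑' m : ℕ, ENNReal.ofReal (φinv (R ^ m / 2) * (((R ^ m)⁻¹ : ℝ) ^ α)) :=
      ENNReal.tsum_comp_le_tsum_of_injective (f := fun m : ℕ => m + m₁) (add_left_injective m₁)
        (fun m => ENNReal.ofReal (φinv (R ^ m / 2) * (((R ^ m)⁻¹ : ℝ) ^ α)))
    have : ∑' m : ℕ, ENNReal.ofReal (((R:ℝ) ^ m₁) ^ α) *
        ENNReal.ofReal (φinv (R ^ (m + m₁) / 2) * (((R ^ (m + m₁))⁻¹ : ℝ) ^ α)) < ⊤ := by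
      rw [ENNReal.tsum_mul_left]
      exact ENNReal.mul_lt_top ENNReal.ofReal_lt_top (lt_of_le_of_lt hshift hT)
    exact this.ne
  set SA : ℝ := SAe.toReal with hSAdef
  have hSA1 : (1:ℝ) ≤ SA := by
    have hterm0 : (1:ℝ≥0∞) ≤ SAe := by
      have h1 : ENNReal.ofReal (φinv (R ^ 0) * (((R ^ (0:ℕ))⁻¹ : ℝ) ^ α)) = 1 := by
        rw [pow_zero, inv_one, Real.one_rpow, mul_one, cih_inv_one hφ hφ1 hφinv]
        exact ENNReal.ofReal_one
      calc (1:ℝ≥0∞) = ENNReal.ofReal (φinv (R ^ 0) * (((R ^ (0:ℕ))⁻¹ : ℝ) ^ α)) := h1.symm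
        _ ≤ SAe := ENNReal.le_tsum 0
    have := ENNReal.toReal_mono hSAfin hterm0
    simpa using this
  have hSA0 : (0:ℝ) < SA := lt_of_lt_of_le one_pos hSA1
  have hSAbd : ∀ K : ℕ, ∑ m ∈ Finset.range K, φinv (R ^ m) * (((R ^ m)⁻¹ : ℝ) ^ α) ≤ SA := by
    intro K
    have h1 : ENNReal.ofReal (∑ m ∈ Finset.range K, φinv (R ^ m) * (((R ^ m)⁻¹ : ℝ) ^ α)) ≤ SAe := by
      rw [ENNReal.ofReal_sum_of_nonneg (fun m _ =>
        mul_nonneg (hφinvnn _ (by positivity)) (by positivity))]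
      exact ENNReal.sum_le_tsum _
    have h2 := ENNReal.toReal_mono hSAfin h1
    rwa [ENNReal.toReal_ofReal (Finset.sum_nonneg (fun m _ =>
      mul_nonneg (hφinvnn _ (by positivity)) (by positivity)))] at h2
  -- the series K₂
  set K₂ : ℝ≥0∞ := ∑' m : ℕ, ENNReal.ofReal (4 * R ^ (m+1)) *
    (ENNReal.ofReal (Φ (R ^ (n₀ + 2) * φinv (R ^ m))))⁻¹ with hK₂def
  have hK₂fin : K₂ < ⊤ := seriesB hR hφspec hφinvR1 hφmono hφge hΦmono hΦge hC
  -- the constant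
  set C : ℝ := R ^ 2 * (2:ℝ) ^ α * R ^ (n₀ + 2) * SA * R ^ α with hCdef
  have hC0 : 0 < C := by
    refine mul_pos (mul_pos (mul_pos (mul_pos (by positivity) (by positivity))
      (by positivity)) hSA0) (by positivity)
  refine ⟨C, hC0, ?_⟩
  intro h hhmono hhpos hhint Ω _ ℙ _ E _ _ _ _ _ _ X hXcont hXmeas hXinc
  haveI : SecondCountableTopology E := UniformSpace.secondCountable_of_separable E
  -- h eventually at least 1
  have hu₀ : ∃ u₀ : ℝ, 1 ≤ u₀ ∧ 1 ≤ h u₀ := by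
    by_contra hcon
    push_neg at hcon
    have hint1 : IntegrableOn (fun _ : ℝ => (1:ℝ)) (Set.Ioi 1) volume := by
      refine (hhint.mono' aestronglyMeasurable_const ?_)
      rw [ae_restrict_iff' measurableSet_Ioi]
      refine Filter.Eventually.of_forall fun u hu => ?_
      have hu1 : (1:ℝ) ≤ u := (le_of_lt hu)
      have hpos : 0 < h u := hhpos u (lt_of_lt_of_le one_pos hu1)
      have hlt : h u < 1 := hcon u hu1
      have : (1:ℝ) ≤ 1 / h u := le_of_lt (one_lt_one_div hpos hlt)
      rw [norm_one]
      exact this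
    rw [integrableOn_const_iff] at hint1
    rcases hint1 with h1 | h2
    · norm_num at h1
    · rw [Real.volume_Ioi] at h2
      exact (lt_irrefl _ h2).elim
  obtain ⟨u₀, hu₀1, hu₀h⟩ := hu₀
  set c : ℝ := Real.log R with hcdef
  have hc0 : 0 < c := Real.log_pos hR
  set j₀ : ℕ := max m₁ ⌈(u₀ + c + 1)/c⌉₊ with hj₀def
  have hj₀c : u₀ + c + 1 ≤ c * j₀ := by
    have h1 : ((⌈(u₀ + c + 1)/c⌉₊ : ℕ) : ℝ) ≤ (j₀ : ℝ) :=
      Nat.cast_le.mpr (le_max_right _ _)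
    have h2 : (u₀ + c + 1)/c ≤ ((⌈(u₀ + c + 1)/c⌉₊ : ℕ) : ℝ) := Nat.le_ceil _
    calc u₀ + c + 1 = c * ((u₀ + c + 1)/c) := by field_simp
      _ ≤ c * j₀ := mul_le_mul_of_nonneg_left (h2.trans h1) hc0.le
  have hj₀R : (2:ℝ) ≤ R ^ j₀ :=
    le_trans hm₁.le (pow_le_pow_right₀ hR.le (le_max_left _ _))
  have hcj_pos : ∀ j : ℕ, j₀ ≤ j → 0 < c * j := by
    intro j hj
    have h1 : (j₀:ℝ) ≤ (j:ℝ) := Nat.cast_le.mpr hj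
    nlinarith [hu₀1]
  have hu₀cj : ∀ j : ℕ, j₀ ≤ j → u₀ ≤ c * j := by
    intro j hj
    have h1 : (j₀:ℝ) ≤ (j:ℝ) := Nat.cast_le.mpr hj
    nlinarith
  have hhcj1 : ∀ j : ℕ, j₀ ≤ j → 1 ≤ h (c * j) := by
    intro j hj
    refine le_trans hu₀h (hhmono ?_ ?_ (hu₀cj j hj))
    · exact mem_Ioi.mpr (lt_of_lt_of_le one_pos hu₀1)
    · exact mem_Ioi.mpr (hcj_pos j hj)
  have hhcjpos : ∀ j : ℕ, j₀ ≤ j → 0 < h (c * j) :=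
    fun j hj => lt_of_lt_of_le one_pos (hhcj1 j hj)
  have hΦinvh1 : ∀ j : ℕ, j₀ ≤ j → 1 ≤ Φinv (h (c * j)) := fun j hj => hΦinvge1 _ (hhcj1 j hj)
  -- thresholds and events
  set lam : ℕ → ℕ → ℝ := fun j m => R ^ 2 * Φinv (h (c * j)) *
    (2 * ((R:ℝ) ^ (j + m))⁻¹) ^ α * (R ^ (n₀ + 2) * φinv (R ^ m)) with hlamdef
  have hxt1 : ∀ m : ℕ, (1:ℝ) ≤ R ^ (n₀ + 2) * φinv (R ^ m) := by
    intro m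
    calc (1:ℝ) = 1 * 1 := (one_mul 1).symm
      _ ≤ R ^ (n₀ + 2) * φinv (R ^ m) :=
        mul_le_mul (hRpow1 _) (hφinvR1 m) zero_le_one (by positivity)
  have hlampos : ∀ j m : ℕ, j₀ ≤ j → 0 < lam j m := by
    intro j m hj
    rw [hlamdef]
    have h1 : (0:ℝ) < Φinv (h (c * j)) := lt_of_lt_of_le one_pos (hΦinvh1 j hj)
    have h2 : (0:ℝ) < (2 * ((R:ℝ) ^ (j + m))⁻¹) ^ α := Real.rpow_pos_of_pos (by positivity) _
    have h3 : (0:ℝ) < R ^ (n₀ + 2) * φinv (R ^ m) := lt_of_lt_of_le one_pos (hxt1 m)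
    positivity
  set q : ℕ → ℕ → ℝ := fun k a => (a:ℝ) * ((R:ℝ) ^ (k+1))⁻¹ with hqdef
  set p : ℕ → ℕ → ℕ → ℝ := fun k a i => ((⌊(a:ℝ)/R⌋₊ + i : ℕ) : ℝ) * ((R:ℝ) ^ k)⁻¹ with hpdef
  set Ev : ℕ → ℕ → ℕ → ℕ → Set Ω := fun j m a i =>
    {ω | lam j m < ‖X (q (j+m) a) ω - X (p (j+m) a i) ω‖} with hEvdef
  set B : ℕ → Set Ω := fun j => ⋃ (m : ℕ), ⋃ a ∈ Finset.range (⌊(R:ℝ)^(m+1)⌋₊ + 1),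
    (Ev j m a 0 ∪ Ev j m a 1) with hBdef
  -- probability of a single event
  have hEvbd : ∀ j m a i : ℕ, j₀ ≤ j → a ≤ ⌊(R:ℝ)^(m+1)⌋₊ → i ≤ 1 →
      ℙ (Ev j m a i) ≤ (ENNReal.ofReal (h (c * j)))⁻¹ *
        (ENNReal.ofReal (Φ (R ^ (n₀ + 2) * φinv (R ^ m))))⁻¹ := by
    intro j m a i hj ha hi
    have hΦx1 : (1:ℝ) ≤ Φ (R ^ (n₀ + 2) * φinv (R ^ m)) :=
      le_trans (hxt1 m) (hΦge _ (hxt1 m))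
    have hhj1 := hhcj1 j hj
    have hRHSrw : (ENNReal.ofReal (h (c * j)))⁻¹ *
        (ENNReal.ofReal (Φ (R ^ (n₀ + 2) * φinv (R ^ m))))⁻¹
        = (ENNReal.ofReal (h (c * j) * Φ (R ^ (n₀ + 2) * φinv (R ^ m))))⁻¹ := by
      rw [ENNReal.ofReal_mul (le_trans zero_le_one hhj1)]
      rw [ENNReal.mul_inv (Or.inl (by simp only [ne_eq, ENNReal.ofReal_eq_zero, not_le]; linarith))
        (Or.inl ENNReal.ofReal_ne_top)]
    rw [hRHSrw]
    set s2 : ℝ := q (j+m) a with hs2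
    set s1 : ℝ := p (j+m) a i with hs1
    by_cases hss : s1 = s2
    · have hempty : Ev j m a i = ∅ := by
        apply Set.eq_empty_iff_forall_notMem.mpr
        intro ω hω
        rw [hEvdef] at hω
        simp only [Set.mem_setOf_eq] at hω
        rw [← hs2, ← hs1, hss, sub_self, norm_zero] at hω
        exact absurd hω (not_lt.mpr (hlampos j m hj).le)
      rw [hempty]
      simp
    · have haR : (a:ℝ) ≤ R ^ (m+1) :=
        le_trans (Nat.cast_le.mpr ha) (Nat.floor_le (by positivity))
      have hfl : (⌊(a:ℝ)/R⌋₊ : ℝ) ≤ (a:ℝ)/R := Nat.floor_le (by positivity)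
      have hadivR : (a:ℝ)/R ≤ R ^ m := by
        rw [div_le_iff₀ hR0]
        calc (a:ℝ) ≤ R^(m+1) := haR
          _ = R ^ m * R := by ring
      have hs2mem : s2 ∈ Set.Icc (0:ℝ) 1 := by
        constructor
        · rw [hs2, hqdef]; positivity
        · rw [hs2, hqdef]
          calc (a:ℝ) * ((R:ℝ)^(j+m+1))⁻¹ ≤ R^(m+1) * ((R:ℝ)^(j+m+1))⁻¹ :=
              mul_le_mul_of_nonneg_right haR (by positivity)
            _ = ((R:ℝ)^j)⁻¹ := by
                rw [show j+m+1 = j + (m+1) by omega, pow_add]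
                field_simp
                ring
            _ ≤ 1 := inv_le_one_of_one_le₀ (hRpow1 j)
      have hi1 : ((i:ℕ):ℝ) ≤ 1 := by exact_mod_cast hi
      have hRj₀half : ((R:ℝ)^j₀)⁻¹ ≤ 1/2 := by
        rw [show (1:ℝ)/2 = (2:ℝ)⁻¹ by norm_num]
        exact inv_anti₀ (by norm_num) hj₀R
      have hs1mem : s1 ∈ Set.Icc (0:ℝ) 1 := by
        constructor
        · rw [hs1, hpdef]; positivity
        · rw [hs1, hpdef]
          have h2 : ((⌊(a:ℝ)/R⌋₊ + i : ℕ):ℝ) ≤ R ^ m + 1 := by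
            push_cast
            linarith
          calc ((⌊(a:ℝ)/R⌋₊ + i:ℕ):ℝ) * ((R:ℝ)^(j+m))⁻¹ ≤ (R^m + 1) * ((R:ℝ)^(j+m))⁻¹ :=
              mul_le_mul_of_nonneg_right h2 (by positivity)
            _ = ((R:ℝ)^j)⁻¹ + ((R:ℝ)^(j+m))⁻¹ := by
                rw [pow_add]
                field_simp
            _ ≤ ((R:ℝ)^j₀)⁻¹ + ((R:ℝ)^j₀)⁻¹ := by
                have hmono1 : ((R:ℝ)^j)⁻¹ ≤ ((R:ℝ)^j₀)⁻¹ :=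
                  inv_anti₀ (by positivity) (pow_le_pow_right₀ hR.le hj)
                have hmono2 : ((R:ℝ)^(j+m))⁻¹ ≤ ((R:ℝ)^j₀)⁻¹ :=
                  inv_anti₀ (by positivity) (pow_le_pow_right₀ hR.le (by omega))
                linarith
            _ ≤ 1 := by linarith
      have hd0 : 0 < |s2 - s1| := abs_pos.mpr (sub_ne_zero.mpr (Ne.symm hss))
      have hdle : |s2 - s1| ≤ 2 * ((R:ℝ)^(j+m))⁻¹ := by
        have hqp : s2 - s1 = ((a:ℝ)/R - ((⌊(a:ℝ)/R⌋₊ + i : ℕ):ℝ)) * ((R:ℝ)^(j+m))⁻¹ := by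
          rw [hs2, hs1]
          simp only [hqdef, hpdef]
          rw [pow_succ]
          field_simp
        rw [hqp, abs_mul, abs_of_nonneg (show (0:ℝ) ≤ ((R:ℝ)^(j+m))⁻¹ by positivity)]
        refine mul_le_mul_of_nonneg_right ?_ (by positivity)
        rw [abs_le]
        have hfl2 := Nat.lt_floor_add_one ((a:ℝ)/R)
        constructor
        · push_cast
          linarith
        · push_cast
          linarith
      have hαpos : (0:ℝ) < |s2 - s1| ^ α := Real.rpow_pos_of_pos hd0 _
      have hmeasg : Measurable (fun ω => ‖X s2 ω - X s1 ω‖ / |s2 - s1| ^ α) :=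
        (((hXmeas s2).sub (hXmeas s1)).norm).div_const _
      have hmark := markov_aux (ℙ := ℙ) hmeasg hΦmono
        (hXinc s2 hs2mem s1 hs1mem (Ne.symm hss))
        (show 0 ≤ lam j m / |s2 - s1| ^ α from div_nonneg (hlampos j m hj).le hαpos.le)
      have hset : Ev j m a i
          = {ω | lam j m / |s2 - s1| ^ α < ‖X s2 ω - X s1 ω‖ / |s2 - s1| ^ α} := by
        ext ω
        rw [hEvdef]
        simp only [Set.mem_setOf_eq]
        rw [← hs2, ← hs1]
        exact (div_lt_div_iff_of_pos_right hαpos).symm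
      rw [hset]
      refine le_trans hmark ?_
      refine ENNReal.inv_le_inv.mpr (ENNReal.ofReal_le_ofReal ?_)
      have hlow : R ^ 2 * Φinv (h (c*j)) * (R ^ (n₀+2) * φinv (R ^ m))
          ≤ lam j m / |s2 - s1| ^ α := by
        have hne : ((2:ℝ) * ((R:ℝ)^(j+m))⁻¹) ^ α ≠ 0 :=
          (Real.rpow_pos_of_pos (by positivity) _).ne'
        have he : lam j m / (2 * ((R:ℝ)^(j+m))⁻¹) ^ α
            = R ^ 2 * Φinv (h (c*j)) * (R ^ (n₀+2) * φinv (R ^ m)) := by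
          rw [hlamdef, div_eq_iff hne]
          ring
        rw [← he]
        refine div_le_div_of_nonneg_left (hlampos j m hj).le hαpos ?_
        exact Real.rpow_le_rpow (abs_nonneg _) hdle hα0.le
      calc h (c*j) * Φ (R^(n₀+2) * φinv (R^m))
          = Φ (Φinv (h (c*j))) * Φ (R^(n₀+2)*φinv (R^m)) := by
            rw [hΦspec _ (le_trans zero_le_one hhj1)]
        _ ≤ Φ (R^2 * Φinv (h (c*j)) * (R^(n₀+2)*φinv (R^m))) :=
            hA _ _ (hΦinvh1 j hj) (hxt1 m)
        _ ≤ Φ (lam j m / |s2 - s1| ^ α) := by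
            refine hΦmono _ _ ?_ hlow
            have h1 : (0:ℝ) ≤ Φinv (h (c*j)) := le_trans zero_le_one (hΦinvh1 j hj)
            have h2 : (0:ℝ) ≤ R^(n₀+2) * φinv (R^m) := le_trans zero_le_one (hxt1 m)
            positivity
  -- probability of B j
  have hBbd : ∀ j : ℕ, j₀ ≤ j → ℙ (B j) ≤ (ENNReal.ofReal (h (c * j)))⁻¹ * K₂ := by
    intro j hj
    have hmbd : ∀ m : ℕ, ℙ (⋃ a ∈ Finset.range (⌊(R:ℝ)^(m+1)⌋₊ + 1), (Ev j m a 0 ∪ Ev j m a 1))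
        ≤ (ENNReal.ofReal (h (c * j)))⁻¹ * (ENNReal.ofReal (4 * R ^ (m+1)) *
          (ENNReal.ofReal (Φ (R ^ (n₀ + 2) * φinv (R ^ m))))⁻¹) := by
      intro m
      set Z : ℝ≥0∞ := (ENNReal.ofReal (h (c * j)))⁻¹ *
        (ENNReal.ofReal (Φ (R ^ (n₀ + 2) * φinv (R ^ m))))⁻¹ with hZ
      have hone : ∀ a ∈ Finset.range (⌊(R:ℝ)^(m+1)⌋₊ + 1),
          ℙ (Ev j m a 0 ∪ Ev j m a 1) ≤ 2 * Z := by
        intro a ha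
        have ha' : a ≤ ⌊(R:ℝ)^(m+1)⌋₊ := Nat.lt_succ_iff.mp (Finset.mem_range.mp ha)
        refine le_trans (measure_union_le _ _) ?_
        rw [two_mul]
        exact add_le_add (hEvbd j m a 0 hj ha' (by norm_num)) (hEvbd j m a 1 hj ha' le_rfl)
      refine le_trans (measure_biUnion_finset_le _ _) ?_
      refine le_trans (Finset.sum_le_sum hone) ?_
      rw [Finset.sum_const, Finset.card_range, nsmul_eq_mul]
      have hcount : ((⌊(R:ℝ)^(m+1)⌋₊ + 1 : ℕ) : ℝ≥0∞) * 2 ≤ ENNReal.ofReal (4 * R^(m+1)) := by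
        have h1 : (⌊(R:ℝ)^(m+1)⌋₊ : ℝ) ≤ R^(m+1) := Nat.floor_le (by positivity)
        have h2 : (((⌊(R:ℝ)^(m+1)⌋₊ + 1 : ℕ) : ℝ)) * 2 ≤ 4 * R^(m+1) := by
          push_cast
          nlinarith [hRpow1 (m+1)]
        calc ((⌊(R:ℝ)^(m+1)⌋₊ + 1 : ℕ) : ℝ≥0∞) * 2
            = ENNReal.ofReal ((((⌊(R:ℝ)^(m+1)⌋₊ + 1 : ℕ) : ℝ)) * 2) := by
              rw [ENNReal.ofReal_mul (by positivity), ENNReal.ofReal_natCast]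
              norm_num
          _ ≤ ENNReal.ofReal (4 * R^(m+1)) := ENNReal.ofReal_le_ofReal h2
      calc ((⌊(R:ℝ)^(m+1)⌋₊ + 1:ℕ):ℝ≥0∞) * (2 * Z)
          = (((⌊(R:ℝ)^(m+1)⌋₊ + 1:ℕ):ℝ≥0∞) * 2) * Z := by rw [mul_assoc]
        _ ≤ ENNReal.ofReal (4*R^(m+1)) * Z := mul_le_mul_left hcount _
        _ = (ENNReal.ofReal (h (c * j)))⁻¹ * (ENNReal.ofReal (4 * R^(m+1)) *
            (ENNReal.ofReal (Φ (R ^ (n₀+2) * φinv (R ^ m))))⁻¹) := by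
            rw [hZ]; ring
    rw [hBdef]
    refine le_trans (measure_iUnion_le _) ?_
    refine le_trans (ENNReal.tsum_le_tsum hmbd) ?_
    rw [ENNReal.tsum_mul_left, hK₂def]
  -- Borel-Cantelli
  have hja : ∀ i : ℕ, j₀ ≤ j₀ + i := fun i => Nat.le_add_right _ _
  have hfnn : ∀ i : ℕ, 0 ≤ 1 / h (c * ((j₀ + i : ℕ) : ℝ)) := by
    intro i
    have := hhcjpos (j₀ + i) (hja i)
    positivity
  have hsummable : Summable (fun i : ℕ => 1 / h (c * ((j₀ + i : ℕ) : ℝ))) := by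
    have ha1 : (1:ℝ) ≤ c * j₀ - c := by nlinarith [hu₀1]
    refine summable_of_sum_range_le (c := (∫ u in Set.Ioi 1, 1 / h u) / c) (fun i => hfnn i) ?_
    intro n
    rw [le_div_iff₀ hc0, Finset.sum_mul]
    have hper : ∀ i : ℕ, (1 / h (c * ((j₀ + i:ℕ):ℝ))) * c
        ≤ ∫ u in Set.Ioc ((c*j₀ - c) + c*i) ((c*j₀ - c) + c*(i+1)), 1 / h u := by
      intro i
      have hend : (c*j₀ - c) + c*(i+1) = c * ((j₀ + i:ℕ):ℝ) := by push_cast; ring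
      have hsub : Set.Ioc ((c*j₀ - c) + c*i) ((c*j₀ - c) + c*(i+1)) ⊆ Set.Ioi (1:ℝ) := by
        intro u hu
        have h1 := hu.1
        have hci : (0:ℝ) ≤ c * i := by positivity
        exact mem_Ioi.mpr (by nlinarith)
      have hcjpos : 0 < c * ((j₀ + i:ℕ):ℝ) := hcj_pos (j₀ + i) (hja i)
      have hconst : ∫ _u in Set.Ioc ((c*j₀-c)+c*i) ((c*j₀-c)+c*(i+1)), (1 / h (c * ((j₀ + i:ℕ):ℝ)))
          = (1 / h (c * ((j₀ + i:ℕ):ℝ))) * c := by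
        rw [setIntegral_const, Real.volume_real_Ioc, smul_eq_mul,
          max_eq_left (by nlinarith)]
        ring
      rw [← hconst]
      refine setIntegral_mono_on ?_ ?_ measurableSet_Ioc ?_
      · exact integrableOn_const (by rw [Real.volume_Ioc]; exact ENNReal.ofReal_ne_top)
      · exact hhint.mono_set hsub
      · intro u hu
        have hu1 : (1:ℝ) < u := hsub hu
        have hupos : 0 < u := lt_trans one_pos hu1
        have hule : u ≤ c * ((j₀ + i:ℕ):ℝ) := by rw [← hend]; exact hu.2
        have hhu : h u ≤ h (c * ((j₀ + i:ℕ):ℝ)) :=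
          hhmono (mem_Ioi.mpr hupos) (mem_Ioi.mpr hcjpos) hule
        exact one_div_le_one_div_of_le (hhpos u hupos) hhu
    refine le_trans (Finset.sum_le_sum (fun i _ => hper i)) ?_
    refine sum_le_integral_aux hhint (fun u hu => ?_) ha1 hc0 n
    have : 0 < h u := hhpos u (lt_trans one_pos hu)
    positivity
  have hBC : ∀ᵐ ω ∂ℙ, ∀ᶠ i in Filter.atTop, ω ∉ B (j₀ + i) := by
    refine MeasureTheory.ae_eventually_notMem ?_
    have hbd2 : ∀ i : ℕ, ℙ (B (j₀ + i)) ≤ ENNReal.ofReal (1 / h (c * ((j₀ + i:ℕ):ℝ))) * K₂ := by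
      intro i
      refine le_trans (hBbd (j₀ + i) (hja i)) ?_
      have hpos : 0 < h (c * ((j₀+i:ℕ):ℝ)) := hhcjpos _ (hja i)
      rw [one_div, ENNReal.ofReal_inv_of_pos hpos]
    refine ne_top_of_le_ne_top ?_ (ENNReal.tsum_le_tsum hbd2)
    rw [ENNReal.tsum_mul_right]
    refine (ENNReal.mul_lt_top ?_ hK₂fin).ne
    rw [← ENNReal.ofReal_tsum_of_nonneg hfnn hsummable]
    exact ENNReal.ofReal_lt_top
  -- conclusion
  filter_upwards [hBC] with ω hω
  obtain ⟨N, hN⟩ := Filter.eventually_atTop.mp hω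
  set J : ℕ := j₀ + N with hJdef
  have hgood : ∀ j : ℕ, J ≤ j → ω ∉ B j := by
    intro j hjJ
    have h1 := hN (j - j₀) (by omega)
    rwa [show j₀ + (j - j₀) = j by omega] at h1
  have hΛ : ∀ j K : ℕ, j₀ ≤ j → ∑ m ∈ Finset.range K, lam j m
      ≤ R ^ 2 * Φinv (h (c*j)) * (2:ℝ) ^ α * (((R:ℝ)^j)⁻¹) ^ α * R ^ (n₀+2) * SA := by
    intro j K hj
    have he : ∀ m : ℕ, lam j m = (R ^ 2 * Φinv (h (c*j)) * (2:ℝ)^α * (((R:ℝ)^j)⁻¹)^α * R^(n₀+2)) *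
        (φinv (R ^ m) * (((R ^ m)⁻¹:ℝ) ^ α)) := by
      intro m
      simp only [hlamdef]
      have h1 : ((R:ℝ)^(j+m))⁻¹ = ((R:ℝ)^j)⁻¹ * ((R:ℝ)^m)⁻¹ := by rw [pow_add, mul_inv]
      have h2 : (2 * ((R:ℝ)^(j+m))⁻¹) ^ α
          = 2^α * ((((R:ℝ)^j)⁻¹)^α * (((R:ℝ)^m)⁻¹)^α) := by
        rw [h1, Real.mul_rpow (by norm_num) (by positivity),
          Real.mul_rpow (by positivity) (by positivity)]
      rw [h2]
      ring
    calc ∑ m ∈ Finset.range K, lam j m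
        = (R ^ 2 * Φinv (h (c*j)) * (2:ℝ)^α * (((R:ℝ)^j)⁻¹)^α * R^(n₀+2)) *
          ∑ m ∈ Finset.range K, (φinv (R ^ m) * (((R ^ m)⁻¹:ℝ) ^ α)) := by
          rw [Finset.mul_sum]
          exact Finset.sum_congr rfl (fun m _ => he m)
      _ ≤ (R ^ 2 * Φinv (h (c*j)) * (2:ℝ)^α * (((R:ℝ)^j)⁻¹)^α * R^(n₀+2)) * SA := by
          refine mul_le_mul_of_nonneg_left (hSAbd K) ?_
          have h1 : (0:ℝ) ≤ Φinv (h (c*j)) := le_trans zero_le_one (hΦinvh1 j hj)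
          positivity
      _ = _ := by ring
  -- main pointwise bound for small t
  have hmain : ∀ t : ℝ, t ∈ Set.Ioo 0 (((R:ℝ) ^ (J+2))⁻¹) →
      ‖X t ω - X 0 ω‖ / (t ^ α * Φinv (h (Real.log (1/t)))) ≤ C := by
    intro t ht
    obtain ⟨ht0, htlt'⟩ := ht
    set L : ℝ := Real.logb R t⁻¹ with hLdef
    have htinvpos : 0 < t⁻¹ := by positivity
    have htinv : t⁻¹ = R ^ L := (Real.rpow_logb hR0 hR.ne' htinvpos).symm
    have hLgt : (J:ℝ) + 2 < L := by
      have h1 : (R:ℝ) ^ (J+2) < t⁻¹ := by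
        rw [lt_inv_comm₀ (by positivity) ht0]
        exact htlt'
      have h2 := Real.logb_lt_logb hR (by positivity) h1
      rwa [show ((R:ℝ) ^ (J+2)) = R ^ ((J+2:ℕ):ℝ) by rw [Real.rpow_natCast],
        Real.logb_rpow hR0 hR.ne', show (((J+2:ℕ)):ℝ) = (J:ℝ) + 2 by push_cast; ring] at h2
    have hL0 : 0 ≤ L :=
      le_of_lt (lt_of_le_of_lt (by positivity : (0:ℝ) ≤ (J:ℝ)+2) hLgt)
    set j : ℕ := ⌈L⌉₊ - 1 with hjdef
    have hceil1 : 1 ≤ ⌈L⌉₊ := by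
      rw [Nat.one_le_ceil_iff]
      exact lt_of_le_of_lt (by positivity : (0:ℝ) ≤ (J:ℝ)+2) hLgt
    have hceil : ⌈L⌉₊ = j + 1 := by omega
    have hjL : (j:ℝ) < L := by
      by_contra hcon
      push_neg at hcon
      have : ⌈L⌉₊ ≤ j := Nat.ceil_le.mpr hcon
      omega
    have hLj1 : L ≤ (j:ℝ) + 1 := by
      have h1 := Nat.le_ceil L
      rw [hceil] at h1
      push_cast at h1
      exact h1
    have hjJ : J + 2 ≤ j + 1 := by
      have h1 : (J:ℝ) + 2 < (j:ℝ) + 1 := lt_of_lt_of_le hLgt hLj1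
      have h2 : (J:ℝ) + 1 < (j:ℝ) := by linarith
      have : J + 1 < j := by exact_mod_cast h2
      omega
    have hjj₀ : j₀ ≤ j := by omega
    have hjJ' : J ≤ j := by omega
    have htRj : t * R ^ j < 1 := by
      have h1 : (R:ℝ) ^ ((j:ℕ):ℝ) < R ^ L := Real.rpow_lt_rpow_of_exponent_lt hR hjL
      rw [← htinv, Real.rpow_natCast] at h1
      calc t * R ^ j < t * t⁻¹ := by
            exact mul_lt_mul_of_pos_left h1 ht0
        _ = 1 := mul_inv_cancel₀ ht0.ne'
    have htge : ((R:ℝ) ^ (j+1))⁻¹ ≤ t := by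
      have h1 : (R:ℝ) ^ L ≤ R ^ ((j:ℝ)+1) := Real.rpow_le_rpow_of_exponent_le hR.le hLj1
      rw [← htinv] at h1
      have h2 : (R:ℝ) ^ ((j:ℝ)+1) = R ^ (j+1) := by
        rw [← Real.rpow_natCast R (j+1)]
        push_cast
        ring_nf
      rw [h2] at h1
      calc ((R:ℝ) ^ (j+1))⁻¹ ≤ (t⁻¹)⁻¹ := inv_anti₀ htinvpos h1
        _ = t := inv_inv t
    have htle1 : t ≤ 1 := by
      have h1 : ((R:ℝ) ^ (J+2))⁻¹ ≤ 1 := inv_le_one_of_one_le₀ (hRpow1 _)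
      linarith
    -- not in the bad set
    have hωj := hgood j hjJ'
    have hnotEv : ∀ m a i : ℕ, a ≤ ⌊(R:ℝ)^(m+1)⌋₊ → i ≤ 1 →
        ¬ (lam j m < ‖X (q (j+m) a) ω - X (p (j+m) a i) ω‖) := by
      intro m a i ha hi hcon
      apply hωj
      rw [hBdef]
      refine Set.mem_iUnion.mpr ⟨m, ?_⟩
      refine Set.mem_biUnion (Finset.mem_range.mpr (Nat.lt_succ_iff.mpr ha)) ?_
      have hmem : ω ∈ Ev j m a i := by
        rw [hEvdef]
        exact hcon
      interval_cases i
      · exact Set.mem_union_left _ hmem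
      · exact Set.mem_union_right _ hmem
    -- the chaining sequence
    set S : ℕ → ℝ := fun k => ((⌊t * R ^ k⌋₊ : ℕ):ℝ) * ((R:ℝ) ^ k)⁻¹ with hSdef
    have hSnn : ∀ k, 0 ≤ S k := by
      intro k
      rw [hSdef]
      positivity
    have hSle : ∀ k, S k ≤ t := by
      intro k
      rw [hSdef]
      have h1 : ((⌊t * R ^ k⌋₊ : ℕ):ℝ) ≤ t * R ^ k := Nat.floor_le (by positivity)
      calc ((⌊t * R ^ k⌋₊ : ℕ):ℝ) * ((R:ℝ) ^ k)⁻¹ ≤ (t * R ^ k) * ((R:ℝ) ^ k)⁻¹ :=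
            mul_le_mul_of_nonneg_right h1 (by positivity)
        _ = t := by field_simp
    have hStclose : ∀ k, t - ((R:ℝ)^k)⁻¹ ≤ S k := by
      intro k
      have hfl := (Nat.lt_floor_add_one (t * R ^ k)).le
      have hpos : (0:ℝ) < ((R:ℝ)^k)⁻¹ := by positivity
      have he : (t*R^k - 1) * ((R:ℝ)^k)⁻¹ = t - ((R:ℝ)^k)⁻¹ := by
        field_simp
      have h2 : (t*R^k - 1) * ((R:ℝ)^k)⁻¹ ≤ ((⌊t*(R:ℝ)^k⌋₊:ℕ):ℝ) * ((R:ℝ)^k)⁻¹ :=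
        mul_le_mul_of_nonneg_right (by push_cast; push_cast at hfl; linarith) hpos.le
      rw [hSdef]
      calc t - ((R:ℝ)^k)⁻¹ = (t*R^k - 1) * ((R:ℝ)^k)⁻¹ := he.symm
        _ ≤ _ := h2
    have hSj : S j = 0 := by
      rw [hSdef]
      simp only []
      rw [Nat.floor_eq_zero.mpr htRj]
      simp
    have hstep : ∀ k : ℕ, j ≤ k → ‖X (S (k+1)) ω - X (S k) ω‖ ≤ lam j (k - j) := by
      intro k hk
      set a : ℕ := ⌊t * R ^ (k+1)⌋₊ with hadef
      set n : ℕ := ⌊t * R ^ k⌋₊ with hndef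
      have haR : (a:ℝ) ≤ t * R^(k+1) := Nat.floor_le (by positivity)
      have hfl_low : ⌊(a:ℝ)/R⌋₊ ≤ n := by
        have h1 : (a:ℝ)/R ≤ t * R ^ k := by
          rw [div_le_iff₀ hR0]
          calc (a:ℝ) ≤ t * R^(k+1) := haR
            _ = t * R ^ k * R := by ring
        calc ⌊(a:ℝ)/R⌋₊ ≤ ⌊t * R ^ k⌋₊ := Nat.floor_mono h1
          _ = n := rfl
      have hfl_high : n ≤ ⌊(a:ℝ)/R⌋₊ + 1 := by
        have h1 : (n:ℝ) ≤ (a:ℝ)/R + 1 := by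
          have h2 : (n:ℝ) ≤ t * R ^ k := Nat.floor_le (by positivity)
          have h3 : t * R^(k+1) < (a:ℝ) + 1 := Nat.lt_floor_add_one _
          have h4 : t * R ^ k < ((a:ℝ) + 1)/R := by
            rw [lt_div_iff₀ hR0]
            calc t * R ^ k * R = t * R^(k+1) := by ring
              _ < (a:ℝ) + 1 := h3
          have h5 : ((a:ℝ)+1)/R ≤ (a:ℝ)/R + 1 := by
            rw [add_div]
            have h6 : 1/R ≤ 1 := by
              rw [div_le_one hR0]
              exact hR.le
            linarith
          linarith
        have h6 : n ≤ ⌊(a:ℝ)/R + 1⌋₊ := Nat.le_floor h1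
        rwa [Nat.floor_add_one (by positivity)] at h6
      set i : ℕ := n - ⌊(a:ℝ)/R⌋₊ with hidef
      have hi1 : i ≤ 1 := by omega
      have hn_eq : n = ⌊(a:ℝ)/R⌋₊ + i := by omega
      have hm : j + (k - j) = k := by omega
      have haA : a ≤ ⌊(R:ℝ)^((k-j)+1)⌋₊ := by
        refine Nat.le_floor ?_
        have h2 : t < ((R:ℝ)^j)⁻¹ := by
          have h2a : t * R^j * ((R:ℝ)^j)⁻¹ < 1 * ((R:ℝ)^j)⁻¹ :=
            mul_lt_mul_of_pos_right htRj (by positivity)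
          rwa [mul_assoc, mul_inv_cancel₀ (by positivity), mul_one, one_mul] at h2a
        have h1 : t * R^(k+1) < ((R:ℝ)^j)⁻¹ * R^(k+1) :=
          mul_lt_mul_of_pos_right h2 (by positivity)
        have h3 : ((R:ℝ)^j)⁻¹ * R^(k+1) = R^((k-j)+1) := by
          rw [show k+1 = j + ((k-j)+1) by omega, pow_add]
          field_simp
        calc (a:ℝ) ≤ t * R^(k+1) := haR
          _ ≤ R^((k-j)+1) := by rw [← h3]; exact h1.le
      have hq' : S (k+1) = q k a := by
        simp only [hSdef, hqdef, hadef]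
      have hp' : S k = p k a i := by
        simp only [hSdef, hpdef]
        rw [← hndef, hn_eq]
      have hnot := hnotEv (k-j) a i haA hi1
      rw [hm] at hnot
      rw [hq', hp']
      exact not_lt.mp hnot
    have hchain : ∀ K : ℕ, ‖X (S (j+K)) ω - X 0 ω‖ ≤ ∑ m ∈ Finset.range K, lam j m := by
      intro K
      induction K with
      | zero =>
          simp only [Nat.add_zero, Finset.range_zero, Finset.sum_empty]
          rw [hSj, sub_self, norm_zero]
      | succ K ih =>
          have h1 := hstep (j+K) (Nat.le_add_right _ _)
          rw [show j + K - j = K by omega] at h1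
          calc ‖X (S (j+(K+1))) ω - X 0 ω‖
              ≤ ‖X (S (j+(K+1))) ω - X (S (j+K)) ω‖ + ‖X (S (j+K)) ω - X 0 ω‖ :=
                norm_sub_le_norm_sub_add_norm_sub _ _ _
            _ ≤ lam j K + ∑ m ∈ Finset.range K, lam j m := by
                refine add_le_add ?_ ih
                rw [show j + (K+1) = (j+K)+1 by omega]
                exact h1
            _ = ∑ m ∈ Finset.range (K+1), lam j m := by
                rw [Finset.sum_range_succ]
                ring
    have hSmem : ∀ K : ℕ, S (j+K) ∈ Set.Icc (0:ℝ) 1 :=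
      fun K => ⟨hSnn _, le_trans (hSle _) htle1⟩
    have htmem : t ∈ Set.Icc (0:ℝ) 1 := ⟨ht0.le, htle1⟩
    have hDtend : Filter.Tendsto (fun K : ℕ => ((R:ℝ)^(j+K))⁻¹) Filter.atTop (nhds 0) := by
      have h1 : Filter.Tendsto (fun n : ℕ => (R⁻¹:ℝ) ^ n) Filter.atTop (nhds 0) :=
        tendsto_pow_atTop_nhds_zero_of_lt_one (by positivity) (inv_lt_one_of_one_lt₀ hR)
      have h2 : Filter.Tendsto (fun K : ℕ => j + K) Filter.atTop Filter.atTop :=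
        Filter.tendsto_atTop_mono (fun K => Nat.le_add_left K j) Filter.tendsto_id
      have h3 := h1.comp h2
      have h4 : (fun K : ℕ => ((R:ℝ)^(j+K))⁻¹)
          = (fun n : ℕ => (R⁻¹:ℝ) ^ n) ∘ (fun K : ℕ => j + K) := by
        funext K
        simp [Function.comp, inv_pow]
      rw [h4]
      exact h3
    have hStend : Filter.Tendsto (fun K : ℕ => S (j+K)) Filter.atTop (nhds t) := by
      refine tendsto_of_tendsto_of_tendsto_of_le_of_le
        (g := fun K : ℕ => t - ((R:ℝ)^(j+K))⁻¹) (h := fun _ : ℕ => t) ?_ tendsto_const_nhds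
        (fun K => hStclose (j+K)) (fun K => hSle (j+K))
      simpa using tendsto_const_nhds.sub hDtend
    have hXtend : Filter.Tendsto (fun K : ℕ => X (S (j+K)) ω) Filter.atTop (nhds (X t ω)) := by
      have hcw := (hXcont ω) t htmem
      exact hcw.tendsto.comp (tendsto_nhdsWithin_of_tendsto_nhds_of_eventually_within _ hStend
        (Filter.Eventually.of_forall hSmem))
    have hnormb : ‖X t ω - X 0 ω‖
        ≤ R ^ 2 * Φinv (h (c*j)) * (2:ℝ)^α * (((R:ℝ)^j)⁻¹)^α * R^(n₀+2) * SA := by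
      refine le_of_tendsto ((hXtend.sub tendsto_const_nhds).norm) ?_
      exact Filter.Eventually.of_forall (fun K => le_trans (hchain K) (hΛ j K hjj₀))
    have hlogpos : 0 < Real.log (1/t) := by
      rw [one_div]
      refine Real.log_pos ?_
      rw [one_lt_inv_iff₀]
      exact ⟨ht0, lt_of_lt_of_le htlt' (inv_le_one_of_one_le₀ (hRpow1 _))⟩
    have hlogR_ne : Real.log R ≠ 0 := by
      rw [← hcdef]
      exact hc0.ne'
    have hcjlog : c * j ≤ Real.log (1/t) := by
      have hlog_eq : Real.log (1/t) = L * c := by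
        rw [one_div, hLdef, Real.logb, hcdef]
        field_simp
      rw [hlog_eq]
      nlinarith [hjL.le, hc0]
    have hhposlog : 0 < h (Real.log (1/t)) := hhpos _ hlogpos
    have hhle : h (c*j) ≤ h (Real.log (1/t)) :=
      hhmono (mem_Ioi.mpr (hcj_pos j hjj₀)) (mem_Ioi.mpr hlogpos) hcjlog
    have hΦinvle : Φinv (h (c*j)) ≤ Φinv (h (Real.log (1/t))) :=
      hΦinvmono _ _ (le_of_lt (hhcjpos j hjj₀)) hhle
    have hden1 : 1 ≤ Φinv (h (Real.log (1/t))) := le_trans (hΦinvh1 j hjj₀) hΦinvle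
    have hdenpos : 0 < t ^ α * Φinv (h (Real.log (1/t))) :=
      mul_pos (Real.rpow_pos_of_pos ht0 α) (lt_of_lt_of_le one_pos hden1)
    rw [div_le_iff₀ hdenpos]
    have hpowle : (((R:ℝ)^j)⁻¹)^α ≤ R^α * t^α := by
      have h1 : ((R:ℝ)^j)⁻¹ = R * ((R:ℝ)^(j+1))⁻¹ := by
        rw [pow_succ]
        field_simp
      rw [h1, Real.mul_rpow hR0.le (by positivity)]
      refine mul_le_mul_of_nonneg_left ?_ (by positivity)
      exact Real.rpow_le_rpow (by positivity) htge hα0.le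
    refine le_trans hnormb ?_
    have hΦinvnn1 : (0:ℝ) ≤ Φinv (h (c*j)) := le_trans zero_le_one (hΦinvh1 j hjj₀)
    have hfac_nn : (0:ℝ) ≤ R ^ 2 * (2:ℝ)^α * R^(n₀+2) * SA :=
      mul_nonneg (mul_nonneg (mul_nonneg (by positivity) (by positivity)) (by positivity)) hSA0.le
    calc R ^ 2 * Φinv (h (c*j)) * (2:ℝ)^α * (((R:ℝ)^j)⁻¹)^α * R^(n₀+2) * SA
        = (R ^ 2 * (2:ℝ)^α * R^(n₀+2) * SA) * (Φinv (h (c*j)) * (((R:ℝ)^j)⁻¹)^α) := by ring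
      _ ≤ (R ^ 2 * (2:ℝ)^α * R^(n₀+2) * SA) * (Φinv (h (Real.log (1/t))) * (R^α * t^α)) := by
          refine mul_le_mul_of_nonneg_left ?_ hfac_nn
          exact mul_le_mul hΦinvle hpowle (by positivity) (le_trans hΦinvnn1 hΦinvle)
      _ = C * (t ^ α * Φinv (h (Real.log (1/t)))) := by
          rw [hCdef]
          ring
  have hεpos : 0 < ((R:ℝ) ^ (J+2))⁻¹ := by positivity
  refine Filter.limsup_le_of_le (by isBoundedDefault) ?_
  filter_upwards [Ioo_mem_nhdsGT_of_mem
    (show (0:ℝ) ∈ Set.Ico 0 (((R:ℝ)^(J+2))⁻¹) from ⟨le_rfl, hεpos⟩)] with t ht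
  exact ENNReal.ofReal_le_ofReal (hmain t ht)
end

section
/- Assume hypothesis (M) with constants p ∈ (0,1) and l > 0. Then for every ε > 0 there exists c > 0 such that for every r > 0, almost surely ℙ( τ_{r+c} − τ_r ≤ l | F_{τ_r} ) < ε. -/
open MeasureTheory ENNReal

/-- The natural filtration of a process `η : [0,∞) × Ω → ℂ`, indexed by `ℝ≥0∞`:
`F_i = σ(η_s : ENNReal.ofReal s ≤ i)`. -/
noncomputable def natFiltration {Ω : Type*} [m0 : MeasurableSpace Ω]
    (η : ℝ → Ω → ℂ) (hmeas : ∀ t, Measurable (η t)) :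
    Filtration ℝ≥0∞ m0 where
  seq i := ⨆ (s : ℝ) (_ : ENNReal.ofReal s ≤ i), MeasurableSpace.comap (η s) inferInstance
  mono' := fun i j hij => by
    refine iSup_le fun s => iSup_le fun hs => ?_
    exact le_iSup_of_le s (le_iSup_of_le (hs.trans hij) le_rfl)
  le' := fun i => by
    refine iSup_le fun s => iSup_le fun _ => ?_
    exact Measurable.comap_le (hmeas s)

/-- The hitting time `τ_r = inf{ t ≥ 0 : |η_t| ≥ r }`, with values in `[0,∞]`
(`inf ∅ = ∞`). -/
noncomputable def hitTime {Ω : Type*} (η : ℝ → Ω → ℂ) (r : ℝ) (ω : Ω) : ℝ≥0∞ :=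
  sInf {i : ℝ≥0∞ | ∃ t : ℝ, 0 ≤ t ∧ i = ENNReal.ofReal t ∧ r ≤ ‖η t ω‖}

/-- The event `{τ_{r+r'} − τ_r ≤ l}`, with the convention that the difference is `∞`
(so the event fails) on `{τ_r = ∞}`. -/
def crossEvent {Ω : Type*} (η : ℝ → Ω → ℂ) (r r' l : ℝ) : Set Ω :=
  {ω | hitTime η r ω ≠ ⊤ ∧ hitTime η (r + r') ω ≤ hitTime η r ω + ENNReal.ofReal l}

lemma hitTime_mono {Ω : Type*} (η : ℝ → Ω → ℂ) {r r' : ℝ} (h : r ≤ r') (ω : Ω) :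
    hitTime η r ω ≤ hitTime η r' ω := by
  apply sInf_le_sInf
  rintro i ⟨t, ht0, hit, hle⟩
  exact ⟨t, ht0, hit, h.trans hle⟩

lemma crossEvent_measurableSet {Ω : Type*} [m : MeasurableSpace Ω]
    (η : ℝ → Ω → ℂ) (r r' l : ℝ)
    (h1 : Measurable[m] (hitTime η r)) (h2 : Measurable[m] (hitTime η (r + r'))) :
    MeasurableSet[m] (crossEvent η r r' l) := by
  have e : crossEvent η r r' l = (hitTime η r ⁻¹' {⊤})ᶜ ∩
      {ω | hitTime η (r + r') ω ≤ hitTime η r ω + ENNReal.ofReal l} := by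
    ext ω; simp [crossEvent]
  rw [e]
  exact ((h1 (measurableSet_singleton ⊤)).compl).inter
    (measurableSet_le h2 (h1.add_const _))

/-- Under hypothesis (M), for every `ε > 0` there exists `c > 0` such that for every `r > 0`,
almost surely `ℙ(τ_{r+c} − τ_r ≤ l | F_{τ_r}) < ε`. -/
theorem stmt_5 {Ω : Type*} [m0 : MeasurableSpace Ω] (ℙ : Measure Ω) [IsProbabilityMeasure ℙ]
    (η : ℝ → Ω → ℂ) (hmeas : ∀ t, Measurable (η t))
    (hcont : ∀ ω, Continuous fun t => η t ω)
    (hstop : ∀ r : ℝ, IsStoppingTime (natFiltration η hmeas)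
      (fun ω => ((hitTime η r ω : ℝ≥0∞) : WithTop ℝ≥0∞)))
    (p l : ℝ) (hp : p ∈ Set.Ioo (0:ℝ) 1) (hl : 0 < l)
    (hM : ∀ r : ℝ, 0 < r → ∀ᵐ ω ∂ℙ,
      (ℙ[Set.indicator (crossEvent η r 6 l) (fun _ => (1:ℝ)) |
        (hstop r).measurableSpace]) ω < p) :
    ∀ ε : ℝ, 0 < ε → ∃ c : ℝ, 0 < c ∧ ∀ r : ℝ, 0 < r → ∀ᵐ ω ∂ℙ,
      (ℙ[Set.indicator (crossEvent η r c l) (fun _ => (1:ℝ)) |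
        (hstop r).measurableSpace]) ω < ε := by
  intro ε hε
  obtain ⟨n, hn⟩ : ∃ n : ℕ, p ^ (n + 1) < ε :=
    (exists_pow_lt_of_lt_one hε hp.2).imp fun n h => lt_of_le_of_lt
      (pow_le_pow_of_le_one hp.1.le hp.2.le (Nat.le_succ n)) h
  set N := n + 1 with hN
  have hNpos : (0:ℝ) < 6 * N := by positivity
  refine ⟨6 * N, hNpos, fun r hr => ?_⟩
  -- basic facts
  have hmono : ∀ {a b : ℝ}, a ≤ b → ∀ ω, hitTime η a ω ≤ hitTime η b ω :=
    fun {a b} h ω => hitTime_mono η h ω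
  have hms_mono : ∀ {a b : ℝ}, a ≤ b →
      (hstop a).measurableSpace ≤ (hstop b).measurableSpace :=
    fun {a b} h => IsStoppingTime.measurableSpace_mono (hstop a) (hstop b)
        (fun ω => WithTop.coe_le_coe.mpr (hmono h ω))
  have hms_le : ∀ a : ℝ, (hstop a).measurableSpace ≤ m0 :=
    fun a => (hstop a).measurableSpace_le
  have hτ_meas : ∀ {a b : ℝ}, a ≤ b →
      Measurable[(hstop b).measurableSpace] (hitTime η a) :=
    fun {a b} h => (by simpa using (hstop a).measurable.untopD ⊤ :
      Measurable[(hstop a).measurableSpace] (hitTime η a)).mono (hms_mono h) le_rfl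
  -- the iterated crossing events
  set B : ℕ → Set Ω := fun k => crossEvent η (r + 6 * k) 6 l with hB
  set A : ℕ → Set Ω := fun k => ⋂ j ∈ Finset.range k, B j with hA
  have hAsucc : ∀ k : ℕ, A (k + 1) = A k ∩ B k := by
    intro k
    simp only [hA, Finset.range_add_one, Finset.set_biInter_insert]
    exact Set.inter_comm _ _
  have hcast : ∀ k : ℕ, ((k : ℝ) + 1) = ((k + 1 : ℕ) : ℝ) := by intro k; push_cast; ring
  have hB_meas : ∀ k : ℕ, MeasurableSet[(hstop (r + 6 * ((k + 1 : ℕ) : ℝ))).measurableSpace]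
      (B k) := by
    intro k
    refine crossEvent_measurableSet (m := (hstop (r + 6 * ((k + 1 : ℕ) : ℝ))).measurableSpace)
        η _ _ _ (hτ_meas ?_) (hτ_meas ?_) <;> · push_cast; linarith
  have hA_meas : ∀ k : ℕ, MeasurableSet[(hstop (r + 6 * (k : ℝ))).measurableSpace] (A k) := by
    intro k
    induction k with
    | zero => simp [hA]
    | succ k ih =>
      rw [hAsucc k]
      have h1 : (r + 6 * (k : ℝ)) ≤ r + 6 * ((k + 1 : ℕ) : ℝ) := by push_cast; linarith
      exact (hms_mono h1 _ ih).inter (hB_meas k)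
  have hB_meas0 : ∀ k : ℕ, MeasurableSet (B k) := fun k => hms_le _ _ (hB_meas k)
  have hA_meas0 : ∀ k : ℕ, MeasurableSet (A k) := fun k => hms_le _ _ (hA_meas k)
  have hint : ∀ s : Set Ω, MeasurableSet s →
      Integrable (Set.indicator s fun _ => (1:ℝ)) ℙ :=
    fun s hs => (integrable_const (1:ℝ)).indicator hs
  -- key induction: conditional probability of A k is at most p ^ k
  have key : ∀ k : ℕ, ∀ᵐ ω ∂ℙ,
      (ℙ[Set.indicator (A k) (fun _ => (1:ℝ)) | (hstop r).measurableSpace]) ω ≤ p ^ k := by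
    intro k
    induction k with
    | zero =>
      have h0 : A 0 = Set.univ := by simp [hA]
      rw [h0]
      have hc := condExp_const (μ := ℙ) (hms_le r) (1:ℝ)
      filter_upwards with ω
      simp [Set.indicator_univ, hc]
    | succ k ih =>
      set mk := (hstop (r + 6 * (k : ℝ))).measurableSpace with hmk
      have hrk : (0:ℝ) < r + 6 * k := by positivity
      have hsub : (hstop r).measurableSpace ≤ mk :=
        hms_mono (by have := Nat.cast_nonneg (α := ℝ) k; linarith : (r:ℝ) ≤ r + 6 * k)
      have htower := condExp_condExp_of_le (μ := ℙ)
        (f := Set.indicator (A (k+1)) fun _ => (1:ℝ)) hsub (hms_le (r + 6 * k))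
      have hindic : Set.indicator (A (k+1)) (fun _ => (1:ℝ)) =
          Set.indicator (A k) (Set.indicator (B k) fun _ => (1:ℝ)) := by
        rw [Set.indicator_indicator, ← hAsucc]
      have hcondik := condExp_indicator (μ := ℙ) (m := mk)
        (hint (B k) (hB_meas0 k)) (hA_meas k)
      have hMk := hM (r + 6 * k) hrk
      -- a.e. bound
      have hbound : ℙ[Set.indicator (A (k+1)) (fun _ => (1:ℝ)) | mk]
          ≤ᵐ[ℙ] fun ω => p * Set.indicator (A k) (fun _ => (1:ℝ)) ω := by
        rw [hindic]
        have hnonneg : 0 ≤ᵐ[ℙ] ℙ[Set.indicator (B k) (fun _ => (1:ℝ)) | mk] :=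
          condExp_nonneg (Filter.Eventually.of_forall fun ω =>
            Set.indicator_nonneg (fun _ _ => zero_le_one) ω)
        filter_upwards [hcondik, hMk, hnonneg] with ω h1 h2 h3
        rw [h1]
        by_cases hω : ω ∈ A k
        · rw [Set.indicator_of_mem hω, Set.indicator_of_mem hω, mul_one]
          exact h2.le
        · rw [Set.indicator_of_notMem hω, Set.indicator_of_notMem hω, mul_zero]
      have hmono_ce := condExp_mono (μ := ℙ) (m := (hstop r).measurableSpace)
        integrable_condExp
        (Integrable.const_mul (hint (A k) (hA_meas0 k)) p)
        hbound
      have hsmul : ℙ[fun ω => p * Set.indicator (A k) (fun _ => (1:ℝ)) ω |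
          (hstop r).measurableSpace]
          =ᵐ[ℙ] fun ω => p * (ℙ[Set.indicator (A k) (fun _ => (1:ℝ)) |
            (hstop r).measurableSpace]) ω := by
        have hs := condExp_smul (μ := ℙ) (m := (hstop r).measurableSpace)
          (p : ℝ) (Set.indicator (A k) fun _ => (1:ℝ))
        filter_upwards [hs] with ω hω
        exact hω
      filter_upwards [htower, hmono_ce, hsmul, ih] with ω h1 h2 h3 h4
      calc (ℙ[Set.indicator (A (k+1)) (fun _ => (1:ℝ)) | (hstop r).measurableSpace]) ω
          = (ℙ[ℙ[Set.indicator (A (k+1)) (fun _ => (1:ℝ)) | mk] |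
              (hstop r).measurableSpace]) ω := h1.symm
        _ ≤ (ℙ[fun ω => p * Set.indicator (A k) (fun _ => (1:ℝ)) ω |
              (hstop r).measurableSpace]) ω := h2
        _ = p * (ℙ[Set.indicator (A k) (fun _ => (1:ℝ)) |
              (hstop r).measurableSpace]) ω := h3
        _ ≤ p * p ^ k := mul_le_mul_of_nonneg_left h4 hp.1.le
        _ = p ^ (k + 1) := by ring
  -- crossEvent for c = 6N is contained in A N
  have hsubset : crossEvent η r (6 * N) l ⊆ A N := by
    intro ω hω
    obtain ⟨hτne, hτle⟩ := hω
    simp only [hA, Set.mem_iInter, Finset.mem_range]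
    intro k hk
    have hkN : (k:ℝ) + 1 ≤ N := by exact_mod_cast hk
    have h1 : hitTime η (r + 6 * k + 6) ω ≤ hitTime η (r + 6 * N) ω := by
      apply hmono; linarith
    have h2 : hitTime η r ω ≤ hitTime η (r + 6 * k) ω := by
      apply hmono; have := Nat.cast_nonneg (α := ℝ) k; linarith
    have h3 : hitTime η (r + 6 * k) ω ≤ hitTime η (r + 6 * N) ω := by
      apply hmono; linarith
    have h4 : hitTime η (r + 6 * N) ω ≤ hitTime η r ω + ENNReal.ofReal l := hτle
    refine ⟨?_, ?_⟩
    · intro htop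
      have hlt : hitTime η (r + 6 * k) ω < ⊤ :=
        lt_of_le_of_lt (h3.trans h4)
          (ENNReal.add_lt_top.mpr ⟨lt_top_iff_ne_top.mpr hτne, ENNReal.ofReal_lt_top⟩)
      exact (hlt.ne htop)
    · calc hitTime η (r + 6 * k + 6) ω ≤ hitTime η (r + 6 * N) ω := h1
        _ ≤ hitTime η r ω + ENNReal.ofReal l := h4
        _ ≤ hitTime η (r + 6 * k) ω + ENNReal.ofReal l := add_le_add_left h2 _
  -- measurability of the target cross event
  have hcross_meas : MeasurableSet (crossEvent η r (6 * (N:ℝ)) l) := by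
    refine crossEvent_measurableSet η _ _ _ ?_ ?_
    · exact (by simpa using (hstop r).measurable.untopD ⊤ :
        Measurable[(hstop r).measurableSpace] (hitTime η r)).mono (hms_le r) le_rfl
    · exact (by simpa using (hstop (r + 6 * (N:ℝ))).measurable.untopD ⊤ :
        Measurable[(hstop (r + 6 * (N:ℝ))).measurableSpace] (hitTime η (r + 6 * (N:ℝ)))).mono (hms_le _) le_rfl
  -- combine
  have hmono_final := condExp_mono (μ := ℙ) (m := (hstop r).measurableSpace)
    (hint _ hcross_meas)
    (hint (A N) (hA_meas0 N))
    (Filter.Eventually.of_forall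
      (Set.indicator_le_indicator_of_subset hsubset fun _ => zero_le_one))
  filter_upwards [hmono_final, key N] with ω h1 h2
  exact lt_of_le_of_lt (h1.trans h2) hn
end

section
/- Let A₁, …, A_k and B₁, …, B_k be events on a probability space and let p > 0 satisfy ℙ(B_j) ≥ p for every j = 1, …, k. For each j set p_j := ℙ( A_j | B_j ∩ (A₁ ∩ B₁)ᶜ ∩ ⋯ ∩ (A_{j−1} ∩ B_{j−1})ᶜ ). If q ∈ (0,1] satisfies exp( −(1 − (1−p)/q)·(p₁ + ⋯ + p_k) ) < q, then ℙ( (A₁ ∩ B₁) ∪ ⋯ ∪ (A_k ∩ B_k) ) > 1 − q. -/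
open MeasureTheory

private def Dset {Ω : Type*} (E : ℕ → Set Ω) (j : ℕ) : Set Ω :=
  ⋂ i ∈ Finset.range j, (E i)ᶜ

private theorem aux_stmt12 {Ω : Type*} [MeasurableSpace Ω] (ℙ : Measure Ω)
    [IsProbabilityMeasure ℙ]
    (k : ℕ) (E B : ℕ → Set Ω) (hE : ∀ j, MeasurableSet (E j))
    (hEB : ∀ j, E j ⊆ B j)
    (p : ℝ) (hp1 : p ≤ 1) (hpB : ∀ j < k, p ≤ (ℙ (B j)).toReal)
    (q : ℝ) (hq0 : 0 < q) (hq1 : q ≤ 1)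
    (hq2 : Real.exp (-(1 - (1 - p) / q) *
      ∑ j ∈ Finset.range k,
        (ℙ (E j ∩ Dset E j)).toReal / (ℙ (B j ∩ Dset E j)).toReal) < q) :
    (ℙ (Dset E k)).toReal < q := by
  classical
  by_contra hge
  push_neg at hge
  set c : ℝ := 1 - (1 - p) / q with hc
  set P : ℕ → ℝ := fun j =>
    (ℙ (E j ∩ Dset E j)).toReal / (ℙ (B j ∩ Dset E j)).toReal with hP
  set d : ℕ → ℝ := fun j => (ℙ (Dset E j)).toReal with hd
  have hfin : ∀ s : Set Ω, ℙ s ≠ ⊤ := fun s => (measure_lt_top ℙ s).ne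
  have hDsucc : ∀ j, Dset E (j + 1) = Dset E j \ E j := by
    intro j
    simp only [Dset, Finset.range_add_one, Finset.set_biInter_insert, Set.diff_eq]
    rw [Set.inter_comm]
  have hDmono : ∀ j, Dset E (j + 1) ⊆ Dset E j := by
    intro j; rw [hDsucc]; exact Set.diff_subset
  have hdmono : Antitone d := by
    apply antitone_nat_of_succ_le
    intro j
    exact ENNReal.toReal_mono (hfin _) (measure_mono (hDmono j))
  have hdq : ∀ j ≤ k, q ≤ d j := fun j hj => le_trans hge (hdmono hj)
  have hPnn : ∀ j, 0 ≤ P j := fun j =>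
    div_nonneg ENNReal.toReal_nonneg ENNReal.toReal_nonneg
  -- single step
  have step : ∀ j < k, d (j + 1) ≤ d j * Real.exp (-(c * P j)) := by
    intro j hjk
    have hdj : q ≤ d j := hdq j hjk.le
    set num : ℝ := (ℙ (E j ∩ Dset E j)).toReal with hnum
    set den : ℝ := (ℙ (B j ∩ Dset E j)).toReal with hden
    have hnum_nn : (0:ℝ) ≤ num := ENNReal.toReal_nonneg
    have hnum_le_den : num ≤ den :=
      ENNReal.toReal_mono (hfin _)
        (measure_mono (Set.inter_subset_inter_left _ (hEB j)))
    -- d (j+1) = d j - num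
    have hkey : d (j + 1) = d j - num := by
      have h1 : ℙ (Dset E j ∩ E j) + ℙ (Dset E j \ E j) = ℙ (Dset E j) :=
        measure_inter_add_diff _ (hE j)
      have h2 := congrArg ENNReal.toReal h1
      rw [ENNReal.toReal_add (hfin _) (hfin _)] at h2
      have h3 : Dset E j ∩ E j = E j ∩ Dset E j := Set.inter_comm _ _
      rw [h3, ← hDsucc j] at h2
      simp only [hd, hnum]
      linarith [h2]
    -- num = P j * den
    have hnum_eq : num = P j * den := by
      rcases eq_or_ne den 0 with h0 | h0
      · have : num = 0 := le_antisymm (h0 ▸ hnum_le_den) hnum_nn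
        simp [this, hP, h0, ← hnum, ← hden]
      · rw [hP]; simp only [← hnum, ← hden]; exact (div_mul_cancel₀ num h0).symm
    -- den ≥ c * d j
    have hden_ge : c * d j ≤ den := by
      have hB1 : p ≤ (ℙ (B j)).toReal := hpB j hjk
      have h1 : ℙ (B j ∪ Dset E j) + ℙ (B j ∩ Dset E j) = ℙ (B j) + ℙ (Dset E j) :=
        measure_union_add_inter _ (MeasurableSet.biInter (Finset.range j).countable_toSet
          (fun i _ => (hE i).compl))
      have h2 := congrArg ENNReal.toReal h1
      rw [ENNReal.toReal_add (hfin _) (hfin _), ENNReal.toReal_add (hfin _) (hfin _)] at h2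
      have h3 : (ℙ (B j ∪ Dset E j)).toReal ≤ 1 := by
        have := measure_mono (Set.subset_univ (B j ∪ Dset E j)) (μ := ℙ)
        have := ENNReal.toReal_mono (hfin _) this
        simpa using this
      -- den ≥ p + d j - 1
      have h4 : p + d j - 1 ≤ den := by
        simp only [hd] at *
        linarith [h2, h3, hB1]
      -- c * d j ≤ d j - (1 - p) ≤ den
      have h5 : c * d j ≤ d j - (1 - p) := by
        rw [hc]
        have h6 : (1 - p) ≤ (1 - p) / q * d j := by
          rw [div_mul_eq_mul_div, le_div_iff₀ hq0]
          nlinarith [hdj, hp1]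
        nlinarith [h6]
      linarith
    -- combine
    have h7 : P j * (c * d j) ≤ P j * den :=
      mul_le_mul_of_nonneg_left hden_ge (hPnn j)
    have h8 : d (j + 1) ≤ d j * (1 - c * P j) := by
      rw [hkey, hnum_eq]; nlinarith [h7]
    have h9 : 1 - c * P j ≤ Real.exp (-(c * P j)) := by
      have := Real.add_one_le_exp (-(c * P j))
      linarith
    have hdj_nn : (0:ℝ) ≤ d j := ENNReal.toReal_nonneg
    calc d (j + 1) ≤ d j * (1 - c * P j) := h8
      _ ≤ d j * Real.exp (-(c * P j)) := mul_le_mul_of_nonneg_left h9 hdj_nn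
  -- induction
  have main : ∀ j ≤ k, d j ≤ Real.exp (-(c * ∑ i ∈ Finset.range j, P i)) := by
    intro j
    induction j with
    | zero =>
      intro _
      have : Dset E 0 = Set.univ := by simp [Dset]
      simp [hd, this]
    | succ j ih =>
      intro hjk
      have hih := ih (Nat.le_of_succ_le hjk)
      have hstep := step j hjk
      have hexp : (0:ℝ) < Real.exp (-(c * P j)) := Real.exp_pos _
      calc d (j + 1) ≤ d j * Real.exp (-(c * P j)) := hstep
        _ ≤ Real.exp (-(c * ∑ i ∈ Finset.range j, P i)) * Real.exp (-(c * P j)) :=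
            mul_le_mul_of_nonneg_right hih hexp.le
        _ = Real.exp (-(c * ∑ i ∈ Finset.range (j + 1), P i)) := by
            rw [← Real.exp_add, Finset.sum_range_succ]; congr 1; ring
  have hfinal := main k le_rfl
  have : Real.exp (-c * ∑ i ∈ Finset.range k, P i) < q := hq2
  rw [neg_mul] at this
  linarith [hge, hfinal]

/-- Conditional second Borel–Cantelli-type lemma: if `ℙ(B_j) ≥ p` for all `j`, and the
conditional probabilities `p_j = ℙ(A_j | B_j ∩ (A_1 ∩ B_1)ᶜ ∩ ⋯ ∩ (A_{j−1} ∩ B_{j−1})ᶜ)`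
satisfy `exp(−(1 − (1−p)/q)(p_1 + ⋯ + p_k)) < q`, then
`ℙ((A_1 ∩ B_1) ∪ ⋯ ∪ (A_k ∩ B_k)) > 1 − q`.
Here `ℙ(A | C) := ℙ(A ∩ C)/ℙ(C)` if `ℙ(C) > 0` and `:= 0` otherwise (which is exactly what
the `ENNReal.toReal` division below yields). -/
theorem stmt_12 {Ω : Type*} [MeasurableSpace Ω] (ℙ : Measure Ω) [IsProbabilityMeasure ℙ]
    (k : ℕ) (A B : ℕ → Set Ω)
    (hA : ∀ j, MeasurableSet (A j)) (hB : ∀ j, MeasurableSet (B j))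
    (p : ℝ) (hp : 0 < p) (hpB : ∀ j < k, p ≤ (ℙ (B j)).toReal)
    (q : ℝ) (hq : q ∈ Set.Ioc (0:ℝ) 1)
    (hq2 : Real.exp (-(1 - (1 - p) / q) *
      (∑ j ∈ Finset.range k,
        (ℙ (A j ∩ (B j ∩ ⋂ i ∈ Finset.range j, (A i ∩ B i)ᶜ))).toReal /
          (ℙ (B j ∩ ⋂ i ∈ Finset.range j, (A i ∩ B i)ᶜ)).toReal)) < q) :
    1 - q < (ℙ (⋃ j ∈ Finset.range k, A j ∩ B j)).toReal := by
  classical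
  obtain ⟨hq0, hq1⟩ := hq
  rcases Nat.eq_zero_or_pos k with hk | hk
  · subst hk
    simp only [Finset.range_zero, Finset.sum_empty, mul_zero, Real.exp_zero] at hq2
    linarith
  -- p ≤ 1
  have hp1 : p ≤ 1 := by
    have h1 := hpB 0 hk
    have h2 : (ℙ (B 0)).toReal ≤ 1 := by
      have := ENNReal.toReal_mono (measure_lt_top ℙ _).ne
        (measure_mono (Set.subset_univ (B 0)) (μ := ℙ))
      simpa using this
    linarith
  set E : ℕ → Set Ω := fun j => A j ∩ B j with hE
  have hEm : ∀ j, MeasurableSet (E j) := fun j => (hA j).inter (hB j)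
  have hEB : ∀ j, E j ⊆ B j := fun j => Set.inter_subset_right
  have hq2' : Real.exp (-(1 - (1 - p) / q) *
      ∑ j ∈ Finset.range k,
        (ℙ (E j ∩ Dset E j)).toReal / (ℙ (B j ∩ Dset E j)).toReal) < q := by
    have hsum : ∀ j ∈ Finset.range k,
        (ℙ (E j ∩ Dset E j)).toReal / (ℙ (B j ∩ Dset E j)).toReal =
        (ℙ (A j ∩ (B j ∩ ⋂ i ∈ Finset.range j, (A i ∩ B i)ᶜ))).toReal /
          (ℙ (B j ∩ ⋂ i ∈ Finset.range j, (A i ∩ B i)ᶜ)).toReal := by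
      intro j _
      have hD : Dset E j = ⋂ i ∈ Finset.range j, (A i ∩ B i)ᶜ := rfl
      rw [hD, hE]
      congr 2
      rw [Set.inter_assoc]
    rw [Finset.sum_congr rfl hsum]
    exact hq2
  have hmain := aux_stmt12 ℙ k E B hEm hEB p hp1 hpB q hq0 hq1 hq2'
  -- Dset E k is the complement of the union
  have hcompl : Dset E k = (⋃ j ∈ Finset.range k, A j ∩ B j)ᶜ := by
    simp only [Dset, hE, Set.compl_iUnion]
  have hUm : MeasurableSet (⋃ j ∈ Finset.range k, A j ∩ B j) :=
    MeasurableSet.biUnion (Finset.range k).countable_toSet (fun i _ => (hA i).inter (hB i))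
  have hadd : (ℙ (⋃ j ∈ Finset.range k, A j ∩ B j)).toReal +
      (ℙ (Dset E k)).toReal = 1 := by
    rw [hcompl]
    have h1 := measure_add_measure_compl hUm (μ := ℙ)
    have h2 := congrArg ENNReal.toReal h1
    rw [ENNReal.toReal_add (measure_lt_top ℙ _).ne (measure_lt_top ℙ _).ne] at h2
    simpa using h2
  linarith
end
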